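/- arXiv:1208.5194 — 2 statements merged into one kernel-verified Lean document; each statement's English description precedes it below -/
import Mathlib

section
/- Let p be a prime, e ≥ 2, n ≥ 2. If λ is an eigenvalue of B_{n,p^{e-1}}, then p^{2n-4} · λ is an eigenvalue of B_{n,p^e}. -/
open scoped Classical

def Primitive {m n : ℕ} (u : Fin n → ZMod m) : Prop :=
  Nat.gcd (Finset.univ.gcd fun i => (u i).val) m = 1

def assoc {m n : ℕ} (u v : Fin n → ZMod m) : Prop :=
  ∃ lam : (ZMod m)ˣ, v = fun i => (lam : ZMod m) * u i

def projSetoid (m n : ℕ) : Setoid {u : Fin n → ZMod m // Primitive u} where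
  r u v := assoc u.1 v.1
  iseqv := by
    refine ⟨fun u => ⟨1, by simp⟩, ?_, ?_⟩
    · rintro u v ⟨l, h⟩
      refine ⟨l⁻¹, ?_⟩
      funext i
      simp [h, ← mul_assoc]
    · rintro u v w ⟨l, hl⟩ ⟨k, hk⟩
      refine ⟨k * l, ?_⟩
      funext i
      simp [hk, hl, mul_assoc]

abbrev ProjPt (m n : ℕ) := Quotient (projSetoid m n)

noncomputable def theta (n m : ℕ) : ℕ := Nat.card (ProjPt m n)

def orthoPt (m n : ℕ) (U W : ProjPt m n) : Prop :=
  ∀ (u w : {x : Fin n → ZMod m // Primitive x}),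
    Quotient.mk (projSetoid m n) u = U → Quotient.mk (projSetoid m n) w = W →
      ∑ i, u.1 i * w.1 i = 0

noncomputable def Bmat (m n : ℕ) : Matrix (ProjPt m n) (ProjPt m n) ℚ :=
  fun U V => (Nat.card {W : ProjPt m n // orthoPt m n U W ∧ orthoPt m n V W} : ℚ)

noncomputable def nuVal (p e : ℕ) (x : ZMod (p^e)) : ℕ := if x = 0 then e else padicValNat p x.val

noncomputable def nuXi (p e : ℕ) {n : ℕ} (u v : Fin n → ZMod (p^e)) : ℕ :=
  sInf {k | ∃ i j : Fin n, k = nuVal p e (u i * v j - u j * v i)}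

noncomputable def red (p e : ℕ) {n : ℕ} (u : Fin n → ZMod (p^e)) : Fin n → ZMod (p^(e-1)) :=
  fun i => ZMod.castHom (pow_dvd_pow p (Nat.sub_le e 1)) (ZMod (p^(e-1))) (u i)

noncomputable def eigMult {ι : Type*} [Fintype ι] (B : Matrix ι ι ℚ) (lam : ℚ) : ℕ :=
  Module.finrank ℚ (LinearMap.ker (B.mulVecLin - lam • (LinearMap.id : (ι → ℚ) →ₗ[ℚ] (ι → ℚ))))



set_option linter.unusedSectionVars false
set_option linter.unusedVariables false
set_option maxHeartbeats 1000000

section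
set_option linter.unusedSectionVars false
set_option linter.unusedVariables false
variable {p e n : ℕ} [hp : Fact p.Prime]

lemma isUnit_iff_not_dvd (he : 1 ≤ e) (x : ZMod (p^e)) : IsUnit x ↔ ¬ p ∣ x.val := by
  have : NeZero (p^e) := ⟨pow_ne_zero _ hp.1.ne_zero⟩
  constructor
  · intro h hdvd
    have hx : ((x.val : ℕ) : ZMod (p^e)) = x := by rw [ZMod.natCast_val, ZMod.cast_id]
    rw [← hx, ZMod.isUnit_iff_coprime] at h
    have := Nat.Coprime.coprime_dvd_right (dvd_pow_self p (by omega)) h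
    exact (Nat.Prime.coprime_iff_not_dvd hp.1).mp this.symm (by simpa using hdvd)
  · intro h
    have : Nat.Coprime x.val (p^e) :=
      Nat.Coprime.pow_right _ ((Nat.Prime.coprime_iff_not_dvd hp.1).mpr h).symm
    have := (ZMod.isUnit_iff_coprime x.val (p^e)).mpr this
    rwa [ZMod.natCast_val, ZMod.cast_id] at this

lemma prim_iff_unit (he : 1 ≤ e) (u : Fin n → ZMod (p^e)) :
    Primitive u ↔ ∃ i, IsUnit (u i) := by
  unfold Primitive
  constructor
  · intro h
    by_contra hc
    push_neg at hc
    have hd : ∀ i, p ∣ (u i).val := fun i => by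
      have := hc i; rw [isUnit_iff_not_dvd he] at this; exact not_not.mp this
    have h1 : p ∣ Finset.univ.gcd fun i => (u i).val :=
      Finset.dvd_gcd fun i _ => hd i
    have h2 : p ∣ p^e := dvd_pow_self p (by omega)
    have : p ∣ Nat.gcd (Finset.univ.gcd fun i => (u i).val) (p^e) := Nat.dvd_gcd h1 h2
    rw [h] at this
    exact hp.1.one_lt.ne' (Nat.eq_one_of_dvd_one this ▸ rfl)
  · rintro ⟨i, hi⟩
    rw [isUnit_iff_not_dvd he] at hi
    have h1 : ¬ p ∣ Finset.univ.gcd fun i => (u i).val := fun hd =>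
      hi (hd.trans (Finset.gcd_dvd (Finset.mem_univ i)))
    have : Nat.Coprime (Finset.univ.gcd fun i => (u i).val) (p^e) :=
      Nat.Coprime.pow_right _ ((Nat.Prime.coprime_iff_not_dvd hp.1).mpr h1).symm
    exact this

end

abbrev PV (m n : ℕ) := {u : Fin n → ZMod m // Primitive u}

section
variable {p e n : ℕ} [hp : Fact p.Prime]


lemma prim_smul (he : 1 ≤ e) {u : Fin n → ZMod (p^e)} (hu : Primitive u)
    (lam : (ZMod (p^e))ˣ) : Primitive (fun i => (lam : ZMod (p^e)) * u i) := by
  rw [prim_iff_unit he] at hu ⊢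
  obtain ⟨i, hi⟩ := hu
  exact ⟨i, (lam.isUnit).mul hi⟩

lemma unit_cancel (he : 1 ≤ e) {u : Fin n → ZMod (p^e)} (hu : Primitive u)
    {a b : ZMod (p^e)} (h : ∀ i, a * u i = b * u i) : a = b := by
  obtain ⟨i, hi⟩ := (prim_iff_unit he u).mp hu
  exact hi.mul_left_cancel (by rw [mul_comm (u i) a, mul_comm (u i) b]; exact h i)

lemma orthoPt_iff {m : ℕ} (u w : PV m n) :
    orthoPt m n (Quotient.mk (projSetoid m n) u) (Quotient.mk (projSetoid m n) w) ↔
      ∑ i, u.1 i * w.1 i = 0 := by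
  constructor
  · intro h; exact h u w rfl rfl
  · intro h u' w' hu hw
    obtain ⟨lam, hl⟩ : assoc u'.1 u.1 := Quotient.eq.mp hu
    obtain ⟨mu, hm⟩ : assoc w'.1 w.1 := Quotient.eq.mp hw
    have key : ((lam * mu : (ZMod m)ˣ) : ZMod m) * ∑ i, u'.1 i * w'.1 i = 0 := by
      push_cast
      rw [Finset.mul_sum, ← h]
      apply Finset.sum_congr rfl
      intro i _
      rw [hl, hm]; ring
    exact (lam * mu).mul_right_eq_zero.mp key

lemma fiber_card (he : 1 ≤ e) (Y₀ : ProjPt (p^e) n) :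
    Nat.card {y : PV (p^e) n // Quotient.mk (projSetoid (p^e) n) y = Y₀}
      = Nat.card (ZMod (p^e))ˣ := by
  refine (Nat.card_eq_of_bijective
    (fun lam : (ZMod (p^e))ˣ =>
      (⟨⟨fun i => (lam : ZMod (p^e)) * Y₀.out.1 i, prim_smul he Y₀.out.2 lam⟩,
        (Quotient.sound ((projSetoid (p^e) n).iseqv.symm (⟨lam, rfl⟩ : assoc Y₀.out.1 _))).trans Y₀.out_eq⟩ :
        {y : PV (p^e) n // Quotient.mk (projSetoid (p^e) n) y = Y₀}))
    ⟨?_, ?_⟩).symm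
  · intro l1 l2 hl
    have := congrFun (congrArg (fun y => y.1.1) hl)
    exact Units.ext (unit_cancel he Y₀.out.2 this)
  · rintro ⟨y, hy⟩
    obtain ⟨lam, hl⟩ : assoc Y₀.out.1 y.1 := Quotient.eq.mp (Y₀.out_eq.trans hy.symm)
    exact ⟨lam, Subtype.ext (Subtype.ext hl.symm)⟩

lemma sum_class (he : 1 ≤ e) (f : ProjPt (p^e) n → ℕ) :
    ∑ y : PV (p^e) n, f (Quotient.mk (projSetoid (p^e) n) y)
      = Nat.card (ZMod (p^e))ˣ * ∑ Y : ProjPt (p^e) n, f Y := by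
  have h1 : ∀ Y : ProjPt (p^e) n,
      ∑ y ∈ Finset.filter (fun y : PV (p^e) n => Quotient.mk (projSetoid (p^e) n) y = Y) Finset.univ,
        f (Quotient.mk (projSetoid (p^e) n) y) = Nat.card (ZMod (p^e))ˣ * f Y := by
    intro Y
    have h2 : ∀ y ∈ Finset.filter (fun y : PV (p^e) n => Quotient.mk (projSetoid (p^e) n) y = Y) Finset.univ,
        f (Quotient.mk (projSetoid (p^e) n) y) = f Y := by
      intro y hy; rw [(Finset.mem_filter.mp hy).2]
    rw [Finset.sum_congr rfl h2, Finset.sum_const, smul_eq_mul]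
    congr 1
    rw [← fiber_card he Y, Nat.card_eq_fintype_card, Fintype.card_subtype]
  rw [← Finset.sum_fiberwise Finset.univ (fun y => Quotient.mk (projSetoid (p^e) n) y)
      (fun y => f (Quotient.mk (projSetoid (p^e) n) y)), Finset.mul_sum]
  exact Finset.sum_congr rfl (fun Y _ => h1 Y)

lemma card_class (he : 1 ≤ e) (Q : ProjPt (p^e) n → Prop) :
    Nat.card {y : PV (p^e) n // Q (Quotient.mk (projSetoid (p^e) n) y)}
      = Nat.card (ZMod (p^e))ˣ * Nat.card {Y : ProjPt (p^e) n // Q Y} := by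
  have := sum_class he (fun Y => if Q Y then 1 else 0)
  simpa [Nat.card_eq_fintype_card, Fintype.card_subtype, Finset.sum_ite_eq,
    Finset.sum_boole] using this

end

section
variable {p : ℕ} [hp : Fact p.Prime] {e : ℕ}

lemma hyperplane_card {n : ℕ} (a : Fin n → ZMod p) (j : Fin n) (hj : a j ≠ 0) (c : ZMod p) :
    Nat.card {t : Fin n → ZMod p // ∑ i, t i * a i = c} = p^(n-1) := by
  set φ : (Fin n → ZMod p) →+ ZMod p :=
    { toFun := fun t => ∑ i, t i * a i,
      map_zero' := by simp,
      map_add' := by intro s t; simp [add_mul, Finset.sum_add_distrib] } with hφ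
  have hsol : ∀ c : ZMod p, φ (fun i => if i = j then c * (a j)⁻¹ else 0) = c := by
    intro c
    simp only [hφ, AddMonoidHom.coe_mk, ZeroHom.coe_mk]
    rw [Finset.sum_eq_single j]
    · simp [mul_assoc, inv_mul_cancel₀ hj]
    · intro b _ hb; simp [hb]
    · intro hj'; exact absurd (Finset.mem_univ j) hj'
  have hsurj : Function.Surjective φ := fun c => ⟨_, hsol c⟩
  -- fiber ≃ ker
  have e1 : {t : Fin n → ZMod p // ∑ i, t i * a i = c} ≃ φ.ker :=
    { toFun := fun t => ⟨t.1 - (fun i => if i = j then c * (a j)⁻¹ else 0), by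
        rw [AddMonoidHom.mem_ker, map_sub, hsol c]
        have : φ t.1 = c := t.2
        rw [this, sub_self]⟩,
      invFun := fun k => ⟨k.1 + (fun i => if i = j then c * (a j)⁻¹ else 0), by
        have h0 : φ k.1 = 0 := AddMonoidHom.mem_ker.mp k.2
        show φ _ = c
        rw [map_add, h0, hsol c, zero_add]⟩,
      left_inv := fun t => by ext i; simp,
      right_inv := fun k => by ext i; simp }
  have hcard : Nat.card (Fin n → ZMod p) = Nat.card (ZMod p) * Nat.card φ.ker := by
    rw [AddSubgroup.card_eq_card_quotient_mul_card_addSubgroup φ.ker]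
    congr 1
    rw [Nat.card_congr (QuotientAddGroup.quotientKerEquivRange φ).toEquiv]
    rw [(AddMonoidHom.range_eq_top).mpr hsurj, AddSubgroup.card_top]
  have hn1 : 1 ≤ n := Nat.one_le_iff_ne_zero.mpr (by rintro rfl; exact j.elim0)
  have hdom : Nat.card (Fin n → ZMod p) = p^n := by
    rw [Nat.card_eq_fintype_card, Fintype.card_fun, ZMod.card, Fintype.card_fin]
  have hZ : Nat.card (ZMod p) = p := by rw [Nat.card_eq_fintype_card, ZMod.card]
  have : p ^ n = p * Nat.card φ.ker := by rw [← hdom, hcard, hZ]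
  have hker : Nat.card φ.ker = p^(n-1) := by
    have hp0 : 0 < p := hp.1.pos
    have : p * Nat.card φ.ker = p * p^(n-1) := by
      rw [← this, ← pow_succ']
      congr 1
      omega
    exact Nat.eq_of_mul_eq_mul_left hp0 this
  rw [Nat.card_congr e1, hker]

end

section
variable {p : ℕ} [hp : Fact p.Prime] {e : ℕ}

lemma key_mod (he : 1 ≤ e) {a b : ℕ} (hab : a ≡ b [MOD p]) :
    ((p^(e-1) * a : ℕ) : ZMod (p^e)) = ((p^(e-1) * b : ℕ) : ZMod (p^e)) := by
  rw [ZMod.natCast_eq_natCast_iff]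
  have := Nat.ModEq.mul_left' (c := p^(e-1)) hab
  have heq : p^(e-1) * p = p^e := by rw [← pow_succ]; congr 1; omega
  rwa [heq] at this

noncomputable def psiFun (p e : ℕ) : ZMod p → ZMod (p^e) := fun t => ((p^(e-1) * t.val : ℕ) : ZMod (p^e))

lemma psi_add (he : 1 ≤ e) (s t : ZMod p) : psiFun p e (s + t) = psiFun p e s + psiFun p e t := by
  unfold psiFun
  have h1 : (s + t).val ≡ s.val + t.val [MOD p] := by
    rw [ZMod.val_add]
    exact (Nat.mod_modEq _ _)
  rw [key_mod he h1]
  push_cast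
  ring

lemma psi_zero (he : 1 ≤ e) : psiFun p e 0 = 0 := by simp [psiFun]

lemma psi_sum (he : 1 ≤ e) {ι : Type*} (s : Finset ι) (f : ι → ZMod p) :
    psiFun p e (∑ i ∈ s, f i) = ∑ i ∈ s, psiFun p e (f i) := by
  classical
  induction s using Finset.cons_induction with
  | empty => simp [psi_zero he]
  | cons a s ha ih => rw [Finset.sum_cons, Finset.sum_cons, psi_add he, ih]

lemma psi_neg (he : 1 ≤ e) (t : ZMod p) : psiFun p e (-t) = - psiFun p e t := by
  have h := psi_add he (-t) t
  simp only [neg_add_cancel, psi_zero he] at h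
  exact eq_neg_of_add_eq_zero_left h.symm

lemma psi_castHom (he : 1 ≤ e) (t : ZMod p) :
    ZMod.castHom (pow_dvd_pow p (Nat.sub_le e 1)) (ZMod (p^(e-1))) (psiFun p e t) = 0 := by
  unfold psiFun
  rw [map_natCast, ZMod.natCast_eq_zero_iff]
  exact Dvd.intro _ rfl

lemma rho_val_lt (he : 1 ≤ e) (t : ZMod p) : p^(e-1) * t.val < p^e := by
  have h1 : t.val < p := ZMod.val_lt t
  have hpos : 0 < p^(e-1) := Nat.pos_of_ne_zero (pow_ne_zero _ hp.1.ne_zero)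
  calc p^(e-1) * t.val < p^(e-1) * p := (mul_lt_mul_iff_right₀ hpos).mpr h1
    _ = p^e := by rw [← pow_succ]; congr 1; omega

noncomputable def rho (p e : ℕ) : ZMod (p^e) → ZMod p := fun x => ((x.val / p^(e-1) : ℕ) : ZMod p)

lemma rho_psi (he : 1 ≤ e) (t : ZMod p) : rho p e (psiFun p e t) = t := by
  unfold rho psiFun
  rw [ZMod.val_cast_of_lt (rho_val_lt he t)]
  rw [Nat.mul_div_cancel_left _ (Nat.pos_of_ne_zero (pow_ne_zero _ hp.1.ne_zero))]
  rw [ZMod.natCast_val, ZMod.cast_id]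

lemma psi_rho (he : 1 ≤ e) {x : ZMod (p^e)}
    (hx : ZMod.castHom (pow_dvd_pow p (Nat.sub_le e 1)) (ZMod (p^(e-1))) x = 0) :
    psiFun p e (rho p e x) = x := by
  have hpe : NeZero (p^(e-1)) := ⟨pow_ne_zero _ hp.1.ne_zero⟩
  have hdvd : p^(e-1) ∣ x.val := by
    rw [ZMod.castHom_apply, ← ZMod.natCast_val, ZMod.natCast_eq_zero_iff] at hx
    exact hx
  obtain ⟨d, hd⟩ := hdvd
  have hdlt : d < p := by
    have h1 : x.val < p^e := ZMod.val_lt x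
    have h2 : p^(e-1) * p = p^e := by rw [← pow_succ]; congr 1; omega
    by_contra hge
    push_neg at hge
    have : p^e ≤ p^(e-1) * d := by
      rw [← h2]
      exact Nat.mul_le_mul_left _ hge
    omega
  unfold psiFun rho
  rw [hd, Nat.mul_div_cancel_left _ (Nat.pos_of_ne_zero (pow_ne_zero _ hp.1.ne_zero))]
  rw [ZMod.val_cast_of_lt hdlt, ← hd, ZMod.natCast_val, ZMod.cast_id]

lemma psi_inj (he : 1 ≤ e) {s t : ZMod p} (h : psiFun p e s = psiFun p e t) : s = t := by
  rw [← rho_psi he s, ← rho_psi he t, h]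

lemma psi_mul (he : 1 ≤ e) (t : ZMod p) (x : ZMod (p^e)) :
    psiFun p e t * x = psiFun p e (t * ((x.val : ℕ) : ZMod p)) := by
  have hx : x = ((x.val : ℕ) : ZMod (p^e)) := by rw [ZMod.natCast_val, ZMod.cast_id]
  conv_lhs => rw [hx]
  unfold psiFun
  rw [← Nat.cast_mul, mul_assoc]
  rw [key_mod he (a := t.val * x.val) (b := (t * ((x.val : ℕ) : ZMod p)).val)]
  have h1 : (t * ((x.val : ℕ) : ZMod p)).val ≡ t.val * ((x.val : ℕ) : ZMod p).val [MOD p] := by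
    rw [ZMod.val_mul]
    exact Nat.mod_modEq _ _
  have h2 : ((x.val : ℕ) : ZMod p).val ≡ x.val [MOD p] := by
    rw [ZMod.val_natCast]
    exact (Nat.mod_modEq _ _)
  exact ((h1.trans ((Nat.ModEq.refl t.val).mul h2)).symm)

end

section
variable {p e n : ℕ} [hp : Fact p.Prime]

lemma red_apply (u : Fin n → ZMod (p^e)) (i : Fin n) :
    red p e u i = ZMod.castHom (pow_dvd_pow p (Nat.sub_le e 1)) (ZMod (p^(e-1))) (u i) := rfl

lemma castHom_val (he : 1 ≤ e) (x : ZMod (p^e)) :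
    (ZMod.castHom (pow_dvd_pow p (Nat.sub_le e 1)) (ZMod (p^(e-1))) x).val = x.val % p^(e-1) := by
  have : NeZero (p^e) := ⟨pow_ne_zero _ hp.1.ne_zero⟩
  rw [ZMod.castHom_apply, ← ZMod.natCast_val, ZMod.val_natCast]

lemma prim_red (he : 2 ≤ e) {u : Fin n → ZMod (p^e)} (hu : Primitive u) :
    Primitive (red p e u) := by
  have he1 : (1:ℕ) ≤ e - 1 := by omega
  rw [prim_iff_unit (by omega : 1 ≤ e)] at hu
  obtain ⟨i, hi⟩ := hu
  rw [prim_iff_unit (e := e - 1) he1]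
  exact ⟨i, hi.map (ZMod.castHom (pow_dvd_pow p (Nat.sub_le e 1)) (ZMod (p^(e-1))))⟩

lemma prim_lift (he : 2 ≤ e) {w : Fin n → ZMod (p^e)} (hw : Primitive (red p e w)) :
    Primitive w := by
  have he1 : (1:ℕ) ≤ e - 1 := by omega
  rw [prim_iff_unit (e := e - 1) he1] at hw
  obtain ⟨i, hi⟩ := hw
  rw [isUnit_iff_not_dvd (e := e - 1) he1] at hi
  rw [prim_iff_unit (by omega : 1 ≤ e)]
  refine ⟨i, (isUnit_iff_not_dvd (by omega : 1 ≤ e) _).mpr ?_⟩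
  intro hdvd
  apply hi
  rw [red_apply, castHom_val (by omega : 1 ≤ e)]
  exact (Nat.dvd_mod_iff (dvd_pow_self p (by omega : e - 1 ≠ 0))).mpr hdvd

noncomputable def liftv (p e : ℕ) {n : ℕ} (w' : Fin n → ZMod (p^(e-1))) : Fin n → ZMod (p^e) :=
  fun i => (((w' i).val : ℕ) : ZMod (p^e))

lemma red_liftv (he : 1 ≤ e) (w' : Fin n → ZMod (p^(e-1))) : red p e (liftv p e w') = w' := by
  have : NeZero (p^(e-1)) := ⟨pow_ne_zero _ hp.1.ne_zero⟩
  funext i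
  rw [red_apply, liftv, map_natCast, ZMod.natCast_val, ZMod.cast_id]

lemma lift_count (he : 2 ≤ e) (u : Fin n → ZMod (p^e)) (hu : Primitive u)
    (w' : Fin n → ZMod (p^(e-1))) :
    Nat.card {w : Fin n → ZMod (p^e) // red p e w = w' ∧ ∑ i, w i * u i = 0}
      = if (∑ i, w' i * red p e u i = 0) then p^(n-1) else 0 := by
  have he1 : (1:ℕ) ≤ e := by omega
  set C : RingHom (ZMod (p^e)) (ZMod (p^(e-1))) :=
    ZMod.castHom (pow_dvd_pow p (Nat.sub_le e 1)) (ZMod (p^(e-1))) with hC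
  split_ifs with h0
  · -- main case
    set w₀ : Fin n → ZMod (p^e) := liftv p e w' with hw₀
    set S₀ : ZMod (p^e) := ∑ i, w₀ i * u i with hS₀
    have hcast : C S₀ = 0 := by
      rw [hS₀, map_sum]
      rw [← h0]
      apply Finset.sum_congr rfl
      intro i _
      rw [map_mul]
      congr 1
      · exact congrFun (red_liftv he1 w') i
    have hψS : psiFun p e (rho p e S₀) = S₀ := psi_rho he1 hcast
    set c₀ : ZMod p := rho p e S₀ with hc₀
    set a : Fin n → ZMod p := fun i => (((u i).val : ℕ) : ZMod p) with ha
    have hker : ∀ (w : Fin n → ZMod (p^e)), red p e w = w' → ∀ i, C (w i - w₀ i) = 0 := by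
      intro w hw i
      rw [map_sub]
      have h1 : C (w i) = w' i := congrFun hw i
      have h2 : C (w₀ i) = w' i := congrFun (red_liftv he1 w') i
      rw [h1, h2, sub_self]
    have key : ∀ (w : Fin n → ZMod (p^e)), red p e w = w' →
        (∑ i, w i * u i = 0 ↔ ∑ i, rho p e (w i - w₀ i) * a i = -c₀) := by
      intro w hw
      have hpsi : ∀ i, psiFun p e (rho p e (w i - w₀ i)) = w i - w₀ i :=
        fun i => psi_rho he1 (hker w hw i)
      constructor
      · intro hsum
        apply psi_inj he1
        rw [psi_sum he1]
        rw [psi_neg he1, hψS]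
        have : ∀ i, psiFun p e (rho p e (w i - w₀ i) * a i) = (w i - w₀ i) * u i := by
          intro i
          rw [← psi_mul he1, hpsi i]
        rw [Finset.sum_congr rfl (fun i _ => this i)]
        have : ∑ i, (w i - w₀ i) * u i = (∑ i, w i * u i) - S₀ := by
          rw [hS₀, ← Finset.sum_sub_distrib]
          apply Finset.sum_congr rfl
          intro i _; ring
        rw [this, hsum, zero_sub]
      · intro hsum
        have h2 : ∑ i, (w i - w₀ i) * u i = -S₀ := by
          have : ∀ i, (w i - w₀ i) * u i = psiFun p e (rho p e (w i - w₀ i) * a i) := by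
            intro i
            rw [← psi_mul he1, hpsi i]
          rw [Finset.sum_congr rfl (fun i _ => this i), ← psi_sum he1, hsum,
            psi_neg he1, hψS]
        have h3 : ∑ i, (w i - w₀ i) * u i = (∑ i, w i * u i) - S₀ := by
          rw [hS₀, ← Finset.sum_sub_distrib]
          apply Finset.sum_congr rfl
          intro i _; ring
        rw [h3] at h2
        linear_combination h2
    have E : {w : Fin n → ZMod (p^e) // red p e w = w' ∧ ∑ i, w i * u i = 0}
        ≃ {t : Fin n → ZMod p // ∑ i, t i * a i = -c₀} :=
      { toFun := fun w => ⟨fun i => rho p e (w.1 i - w₀ i), (key w.1 w.2.1).mp w.2.2⟩,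
        invFun := fun t => ⟨fun i => w₀ i + psiFun p e (t.1 i), by
          have hred : red p e (fun i => w₀ i + psiFun p e (t.1 i)) = w' := by
            funext i
            rw [red_apply]
            show C _ = _
            rw [map_add]
            have := psi_castHom (p := p) (e := e) he1 (t.1 i)
            rw [this, add_zero]
            exact congrFun (red_liftv he1 w') i
          refine ⟨hred, ?_⟩
          rw [key _ hred]
          have : ∀ i, rho p e ((w₀ i + psiFun p e (t.1 i)) - w₀ i) = t.1 i := by
            intro i
            rw [add_sub_cancel_left, rho_psi he1]
          rw [Finset.sum_congr rfl (fun i _ => by rw [this i])]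
          exact t.2⟩,
        left_inv := fun w => by
          apply Subtype.ext
          funext i
          show w₀ i + psiFun p e (rho p e (w.1 i - w₀ i)) = w.1 i
          rw [psi_rho he1 (hker w.1 w.2.1 i)]
          ring,
        right_inv := fun t => by
          apply Subtype.ext
          funext i
          show rho p e ((w₀ i + psiFun p e (t.1 i)) - w₀ i) = t.1 i
          rw [add_sub_cancel_left, rho_psi he1] }
    rw [Nat.card_congr E]
    obtain ⟨j, hj⟩ := (prim_iff_unit he1 u).mp hu
    refine hyperplane_card a j ?_ _
    rw [ha]
    rw [isUnit_iff_not_dvd he1] at hj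
    simp only [ne_eq, ZMod.natCast_eq_zero_iff]
    exact hj
  · -- empty case
    have : IsEmpty {w : Fin n → ZMod (p^e) // red p e w = w' ∧ ∑ i, w i * u i = 0} := by
      constructor
      rintro ⟨w, hred, hsum⟩
      apply h0
      have := congrArg C hsum
      rw [map_sum, map_zero] at this
      rw [← this]
      apply Finset.sum_congr rfl
      intro i _
      rw [map_mul]
      congr 1
      exact (congrFun hred i).symm
    exact Nat.card_of_isEmpty
end
section
variable {p e n : ℕ} [hp : Fact p.Prime]

lemma red_smul (lam : (ZMod (p^e))ˣ) (u : Fin n → ZMod (p^e)) :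
    red p e (fun i => (lam : ZMod (p^e)) * u i)
      = fun i => ((Units.map (ZMod.castHom (pow_dvd_pow p (Nat.sub_le e 1))
          (ZMod (p^(e-1)))).toMonoidHom lam : (ZMod (p^(e-1)))ˣ) : ZMod (p^(e-1))) * red p e u i := by
  funext i
  rw [red_apply, red_apply, map_mul]
  rfl

noncomputable def redP (he : 2 ≤ e) : PV (p^e) n → PV (p^(e-1)) n :=
  fun u => ⟨red p e u.1, prim_red he u.2⟩

noncomputable def redbar (he : 2 ≤ e) : ProjPt (p^e) n → ProjPt (p^(e-1)) n :=
  Quotient.map (redP he) (by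
    rintro u v ⟨lam, hl⟩
    refine ⟨Units.map (ZMod.castHom (pow_dvd_pow p (Nat.sub_le e 1))
      (ZMod (p^(e-1)))).toMonoidHom lam, ?_⟩
    show red p e v.1 = _
    rw [hl, red_smul]
    rfl)

lemma redbar_mk (he : 2 ≤ e) (u : PV (p^e) n) :
    redbar he (Quotient.mk (projSetoid (p^e) n) u)
      = Quotient.mk (projSetoid (p^(e-1)) n) (redP he u) := rfl

lemma exists_unit_lift (he : 2 ≤ e) (mu : (ZMod (p^(e-1)))ˣ) :
    ∃ lam : (ZMod (p^e))ˣ,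
      Units.map (ZMod.castHom (pow_dvd_pow p (Nat.sub_le e 1))
        (ZMod (p^(e-1)))).toMonoidHom lam = mu := by
  have hne : NeZero (p^(e-1)) := ⟨pow_ne_zero _ hp.1.ne_zero⟩
  set x : ZMod (p^e) := (((mu : ZMod (p^(e-1))).val : ℕ) : ZMod (p^e)) with hx
  have hcast : ZMod.castHom (pow_dvd_pow p (Nat.sub_le e 1)) (ZMod (p^(e-1))) x
      = (mu : ZMod (p^(e-1))) := by
    rw [hx, map_natCast, ZMod.natCast_val, ZMod.cast_id]
  have hxval : x.val = (mu : ZMod (p^(e-1))).val := by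
    rw [hx]
    apply ZMod.val_cast_of_lt
    calc (mu : ZMod (p^(e-1))).val < p^(e-1) := ZMod.val_lt _
      _ ≤ p^e := Nat.pow_le_pow_right hp.1.pos (by omega)
  have hunit : IsUnit x := by
    rw [isUnit_iff_not_dvd (by omega : 1 ≤ e), hxval]
    have := (isUnit_iff_not_dvd (e := e-1) (by omega : 1 ≤ e - 1) (mu : ZMod (p^(e-1)))).mp
      mu.isUnit
    exact this
  refine ⟨hunit.unit, Units.ext ?_⟩
  show ZMod.castHom _ (ZMod (p^(e-1))) (hunit.unit : ZMod (p^e)) = (mu : ZMod (p^(e-1)))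
  rw [IsUnit.unit_spec, hcast]

noncomputable def uLift (he : 2 ≤ e) (mu : (ZMod (p^(e-1)))ˣ) : (ZMod (p^e))ˣ :=
  (exists_unit_lift he mu).choose

lemma uLift_spec (he : 2 ≤ e) (mu : (ZMod (p^(e-1)))ˣ) :
    Units.map (ZMod.castHom (pow_dvd_pow p (Nat.sub_le e 1))
      (ZMod (p^(e-1)))).toMonoidHom (uLift he mu) = mu :=
  (exists_unit_lift he mu).choose_spec

lemma uLift_cast (he : 2 ≤ e) (mu : (ZMod (p^(e-1)))ˣ) :
    ZMod.castHom (pow_dvd_pow p (Nat.sub_le e 1)) (ZMod (p^(e-1)))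
      ((uLift he mu : ZMod (p^e))) = (mu : ZMod (p^(e-1))) := by
  have := congrArg (fun z : (ZMod (p^(e-1)))ˣ => (z : ZMod (p^(e-1)))) (uLift_spec he mu)
  exact this

lemma units_card_ratio (he : 2 ≤ e) :
    Nat.card (ZMod (p^e))ˣ = p * Nat.card (ZMod (p^(e-1)))ˣ := by
  have h1 : NeZero (p^e) := ⟨pow_ne_zero _ hp.1.ne_zero⟩
  have h2 : NeZero (p^(e-1)) := ⟨pow_ne_zero _ hp.1.ne_zero⟩
  rw [Nat.card_eq_fintype_card, Nat.card_eq_fintype_card,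
    ZMod.card_units_eq_totient, ZMod.card_units_eq_totient,
    Nat.totient_prime_pow hp.1 (by omega : 0 < e),
    Nat.totient_prime_pow hp.1 (by omega : 0 < e - 1)]
  rw [← mul_assoc, ← pow_succ']
  congr 2
  omega

lemma units_card_pos : 0 < Nat.card (ZMod (p^(e-1)))ˣ := by
  have h2 : NeZero (p^(e-1)) := ⟨pow_ne_zero _ hp.1.ne_zero⟩
  exact Nat.card_pos

end
section
variable {p e n : ℕ} [hp : Fact p.Prime]

lemma dot_comm {m : ℕ} (a b : Fin n → ZMod m) :
    (∑ i, a i * b i) = ∑ i, b i * a i :=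
  Finset.sum_congr rfl (fun i _ => mul_comm _ _)

lemma card_subtype_sum {α : Type*} [Fintype α] (P : α → Prop) :
    Nat.card {x // P x} = ∑ x : α, if P x then 1 else 0 := by
  rw [Nat.card_eq_fintype_card, Fintype.card_subtype, Finset.card_filter]

lemma redbar_eq_iff (he : 2 ≤ e) (v : PV (p^e) n) (V' : ProjPt (p^(e-1)) n) :
    redbar he (Quotient.mk (projSetoid (p^e) n) v) = V'
      ↔ ∃ mu : (ZMod (p^(e-1)))ˣ,
          red p e v.1 = fun i => (mu : ZMod (p^(e-1))) * V'.out.1 i := by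
  rw [redbar_mk]
  constructor
  · intro h
    obtain ⟨mu, hm⟩ : assoc V'.out.1 (redP he v).1 :=
      Quotient.eq.mp (V'.out_eq.trans h.symm)
    exact ⟨mu, hm⟩
  · rintro ⟨mu, hm⟩
    exact (Quotient.sound ((⟨mu, hm⟩ : assoc V'.out.1 (redP he v).1))).symm.trans V'.out_eq

noncomputable def DFun (he : 2 ≤ e) (V' : ProjPt (p^(e-1)) n) (w : PV (p^e) n) :
    (ZMod (p^(e-1)))ˣ × {x : Fin n → ZMod (p^e) // red p e x = V'.out.1 ∧ ∑ i, x i * w.1 i = 0}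
    → {v : PV (p^e) n //
        redbar he (Quotient.mk (projSetoid (p^e) n) v) = V' ∧ ∑ i, v.1 i * w.1 i = 0} :=
  fun z =>
    ⟨⟨fun i => ((uLift he z.1 : (ZMod (p^e))ˣ) : ZMod (p^e)) * z.2.1 i,
      prim_smul (by omega : (1:ℕ) ≤ e)
        (prim_lift he (by rw [z.2.2.1]; exact V'.out.2)) (uLift he z.1)⟩,
     by
      rw [redbar_eq_iff he]
      refine ⟨z.1, ?_⟩
      show red p e (fun i => _ * z.2.1 i) = _
      rw [red_smul, uLift_spec he z.1, z.2.2.1],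
     by
      have h1 : ∑ i, ((uLift he z.1 : (ZMod (p^e))ˣ) : ZMod (p^e)) * z.2.1 i * w.1 i
          = ((uLift he z.1 : (ZMod (p^e))ˣ) : ZMod (p^e)) * ∑ i, z.2.1 i * w.1 i := by
        rw [Finset.mul_sum]
        exact Finset.sum_congr rfl (fun i _ => by ring)
      show ∑ i, _ * z.2.1 i * w.1 i = 0
      rw [h1, z.2.2.2, mul_zero]⟩

lemma DFun_bij (he : 2 ≤ e) (V' : ProjPt (p^(e-1)) n) (w : PV (p^e) n) :
    Function.Bijective (DFun he V' w) := by
  have he1 : (1:ℕ) ≤ e := by omega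
  have he1' : (1:ℕ) ≤ e - 1 := by omega
  constructor
  · rintro ⟨m1, x1⟩ ⟨m2, x2⟩ h
    have h1 : ∀ i, ((uLift he m1 : (ZMod (p^e))ˣ) : ZMod (p^e)) * x1.1 i
        = ((uLift he m2 : (ZMod (p^e))ˣ) : ZMod (p^e)) * x2.1 i := by
      intro i
      exact congrFun (congrArg (fun y => y.1.1) h) i
    have h2 : ∀ i, (m1 : ZMod (p^(e-1))) * V'.out.1 i = (m2 : ZMod (p^(e-1))) * V'.out.1 i := by
      intro i
      have := congrArg (ZMod.castHom (pow_dvd_pow p (Nat.sub_le e 1)) (ZMod (p^(e-1)))) (h1 i)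
      rw [map_mul, map_mul, uLift_cast he m1, uLift_cast he m2] at this
      have hx1 : ZMod.castHom (pow_dvd_pow p (Nat.sub_le e 1)) (ZMod (p^(e-1))) (x1.1 i)
          = V'.out.1 i := congrFun x1.2.1 i
      have hx2 : ZMod.castHom (pow_dvd_pow p (Nat.sub_le e 1)) (ZMod (p^(e-1))) (x2.1 i)
          = V'.out.1 i := congrFun x2.2.1 i
      rwa [hx1, hx2] at this
    have hm : m1 = m2 := Units.ext (unit_cancel (e := e-1) he1' V'.out.2 h2)
    subst hm
    have hx : x1 = x2 := by
      apply Subtype.ext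
      funext i
      exact (uLift he m1).isUnit.mul_left_cancel (h1 i)
    rw [hx]
  · rintro ⟨v, hv1, hv2⟩
    obtain ⟨mu, hm⟩ := (redbar_eq_iff he v V').mp hv1
    refine ⟨⟨mu, ⟨fun i => (((uLift he mu)⁻¹ : (ZMod (p^e))ˣ) : ZMod (p^e)) * v.1 i, ?_, ?_⟩⟩, ?_⟩
    · rw [red_smul]
      funext i
      rw [map_inv, uLift_spec he mu]
      have := congrFun hm i
      rw [this]
      simp [← mul_assoc]
    · have h1 : ∑ i, (((uLift he mu)⁻¹ : (ZMod (p^e))ˣ) : ZMod (p^e)) * v.1 i * w.1 i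
          = (((uLift he mu)⁻¹ : (ZMod (p^e))ˣ) : ZMod (p^e)) * ∑ i, v.1 i * w.1 i := by
        rw [Finset.mul_sum]
        exact Finset.sum_congr rfl (fun i _ => by ring)
      rw [h1, hv2, mul_zero]
    · apply Subtype.ext
      apply Subtype.ext
      funext i
      show ((uLift he mu : (ZMod (p^e))ˣ) : ZMod (p^e)) * (_ * v.1 i) = v.1 i
      rw [← mul_assoc]
      simp

lemma classD (he : 2 ≤ e) (V' : ProjPt (p^(e-1)) n) (w : PV (p^e) n) :
    Nat.card {v : PV (p^e) n //
        redbar he (Quotient.mk (projSetoid (p^e) n) v) = V' ∧ ∑ i, v.1 i * w.1 i = 0}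
      = Nat.card (ZMod (p^(e-1)))ˣ *
          (if ∑ i, V'.out.1 i * red p e w.1 i = 0 then p^(n-1) else 0) := by
  rw [← Nat.card_eq_of_bijective (DFun he V' w) (DFun_bij he V' w)]
  rw [Nat.card_prod]
  congr 1
  exact lift_count he w.1 w.2 V'.out.1

end
section
variable {p e n : ℕ} [hp : Fact p.Prime]

lemma star (he : 2 ≤ e) (hn : 2 ≤ n) (U : ProjPt (p^e) n) (V' : ProjPt (p^(e-1)) n) :
    (∑ V : ProjPt (p^e) n, if redbar he V = V'
        then Nat.card {W : ProjPt (p^e) n // orthoPt (p^e) n U W ∧ orthoPt (p^e) n V W} else 0)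
      = p^(2*n-4) * Nat.card {W' : ProjPt (p^(e-1)) n //
          orthoPt (p^(e-1)) n (redbar he U) W' ∧ orthoPt (p^(e-1)) n V' W'} := by
  have he1 : (1:ℕ) ≤ e := by omega
  have he1' : (1:ℕ) ≤ e - 1 := by omega
  set G := Nat.card (ZMod (p^e))ˣ with hG
  set G' := Nat.card (ZMod (p^(e-1)))ˣ with hG'
  set T := Nat.card {W' : ProjPt (p^(e-1)) n //
      orthoPt (p^(e-1)) n (redbar he U) W' ∧ orthoPt (p^(e-1)) n V' W'} with hT
  set LHS := ∑ V : ProjPt (p^e) n, if redbar he V = V'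
      then Nat.card {W : ProjPt (p^e) n // orthoPt (p^e) n U W ∧ orthoPt (p^e) n V W} else 0
    with hLHS
  -- Step 1: multiply by G, declassify W
  have step1 : G * LHS = ∑ V : ProjPt (p^e) n, if redbar he V = V'
      then Nat.card {w : PV (p^e) n //
        orthoPt (p^e) n U (Quotient.mk (projSetoid (p^e) n) w)
          ∧ orthoPt (p^e) n V (Quotient.mk (projSetoid (p^e) n) w)} else 0 := by
    rw [hLHS, Finset.mul_sum]
    refine Finset.sum_congr rfl (fun V _ => ?_)
    rw [mul_ite, mul_zero]
    congr 1
    exact (card_class he1 (fun W => orthoPt (p^e) n U W ∧ orthoPt (p^e) n V W)).symm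
  -- Step 2+3: swap sums, pull out U-orthogonality
  have step3 : G * LHS = ∑ w : PV (p^e) n,
      if orthoPt (p^e) n U (Quotient.mk (projSetoid (p^e) n) w)
      then Nat.card {V : ProjPt (p^e) n // redbar he V = V'
          ∧ orthoPt (p^e) n V (Quotient.mk (projSetoid (p^e) n) w)} else 0 := by
    rw [step1]
    have h2 : ∀ V : ProjPt (p^e) n,
        (if redbar he V = V' then Nat.card {w : PV (p^e) n //
          orthoPt (p^e) n U (Quotient.mk (projSetoid (p^e) n) w)
            ∧ orthoPt (p^e) n V (Quotient.mk (projSetoid (p^e) n) w)} else 0)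
          = ∑ w : PV (p^e) n, if (redbar he V = V'
              ∧ orthoPt (p^e) n U (Quotient.mk (projSetoid (p^e) n) w)
              ∧ orthoPt (p^e) n V (Quotient.mk (projSetoid (p^e) n) w)) then 1 else 0 := by
      intro V
      by_cases hA : redbar he V = V'
      · rw [if_pos hA, card_subtype_sum]
        exact Finset.sum_congr rfl (fun w _ => by
          by_cases hB : orthoPt (p^e) n U (Quotient.mk (projSetoid (p^e) n) w)
            ∧ orthoPt (p^e) n V (Quotient.mk (projSetoid (p^e) n) w)
          · rw [if_pos hB, if_pos ⟨hA, hB⟩]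
          · rw [if_neg hB, if_neg (by tauto)])
      · rw [if_neg hA]
        symm
        apply Finset.sum_eq_zero
        intro w _
        rw [if_neg (by tauto)]
    rw [Finset.sum_congr rfl (fun V _ => h2 V), Finset.sum_comm]
    refine Finset.sum_congr rfl (fun w _ => ?_)
    by_cases hU : orthoPt (p^e) n U (Quotient.mk (projSetoid (p^e) n) w)
    · rw [if_pos hU, card_subtype_sum]
      exact Finset.sum_congr rfl (fun V _ => by
        by_cases hB : redbar he V = V' ∧ orthoPt (p^e) n V (Quotient.mk (projSetoid (p^e) n) w)
        · rw [if_pos ⟨hB.1, hU, hB.2⟩, if_pos hB]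
        · rw [if_neg (by tauto), if_neg hB])
    · rw [if_neg hU]
      apply Finset.sum_eq_zero
      intro V _
      rw [if_neg (by tauto)]
  -- Step 4+5: multiply by G again, declassify V, apply classD
  have step5 : G * (G * LHS) = G' * p^(n-1) * Nat.card {w : PV (p^e) n //
      orthoPt (p^e) n U (Quotient.mk (projSetoid (p^e) n) w)
        ∧ ∑ i, V'.out.1 i * red p e w.1 i = 0} := by
    rw [step3, Finset.mul_sum]
    have h4 : ∀ w : PV (p^e) n,
        G * (if orthoPt (p^e) n U (Quotient.mk (projSetoid (p^e) n) w)
          then Nat.card {V : ProjPt (p^e) n // redbar he V = V'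
            ∧ orthoPt (p^e) n V (Quotient.mk (projSetoid (p^e) n) w)} else 0)
        = G' * p^(n-1) * (if (orthoPt (p^e) n U (Quotient.mk (projSetoid (p^e) n) w)
            ∧ ∑ i, V'.out.1 i * red p e w.1 i = 0) then 1 else 0) := by
      intro w
      by_cases hU : orthoPt (p^e) n U (Quotient.mk (projSetoid (p^e) n) w)
      · rw [if_pos hU]
        have hc : G * Nat.card {V : ProjPt (p^e) n // redbar he V = V'
            ∧ orthoPt (p^e) n V (Quotient.mk (projSetoid (p^e) n) w)}
            = Nat.card {v : PV (p^e) n //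
                redbar he (Quotient.mk (projSetoid (p^e) n) v) = V'
                  ∧ ∑ i, v.1 i * w.1 i = 0} := by
          rw [← card_class he1 (fun V => redbar he V = V'
            ∧ orthoPt (p^e) n V (Quotient.mk (projSetoid (p^e) n) w))]
          exact Nat.card_congr (Equiv.subtypeEquivRight (fun v =>
            and_congr_right (fun _ => orthoPt_iff v w)))
        rw [hc, classD he V' w]
        by_cases hC : ∑ i, V'.out.1 i * red p e w.1 i = 0
        · rw [if_pos hC, if_pos ⟨hU, hC⟩, mul_one]
        · rw [if_neg hC, if_neg (by tauto), mul_zero, mul_zero]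
      · rw [if_neg hU, if_neg (by tauto), mul_zero, mul_zero]
    simp only [h4]
    rw [card_subtype_sum, Finset.mul_sum]
    congr! 4
  -- Step 6: fiber over reduction of w
  have step6 : Nat.card {w : PV (p^e) n //
      orthoPt (p^e) n U (Quotient.mk (projSetoid (p^e) n) w)
        ∧ ∑ i, V'.out.1 i * red p e w.1 i = 0}
      = p^(n-1) * Nat.card {w' : PV (p^(e-1)) n //
          (∑ i, V'.out.1 i * w'.1 i = 0) ∧ ∑ i, w'.1 i * red p e U.out.1 i = 0} := by
    have hUdot : Nat.card {w : PV (p^e) n //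
        orthoPt (p^e) n U (Quotient.mk (projSetoid (p^e) n) w)
          ∧ ∑ i, V'.out.1 i * red p e w.1 i = 0}
        = Nat.card {w : PV (p^e) n //
            (∑ i, U.out.1 i * w.1 i = 0) ∧ ∑ i, V'.out.1 i * red p e w.1 i = 0} := by
      apply Nat.card_congr
      refine Equiv.subtypeEquivRight (fun w => and_congr_left (fun _ => ?_))
      conv_lhs => rw [← U.out_eq]
      exact orthoPt_iff U.out w
    rw [hUdot]
    set α := {w : PV (p^e) n //
        (∑ i, U.out.1 i * w.1 i = 0) ∧ ∑ i, V'.out.1 i * red p e w.1 i = 0} with hα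
    have hsig : Nat.card α = ∑ w' : PV (p^(e-1)) n,
        Nat.card {x : α // redP he x.1 = w'} := by
      rw [Nat.card_congr (Equiv.sigmaFiberEquiv (fun x : α => redP he x.1)).symm,
        Nat.card_eq_fintype_card, Fintype.card_sigma]
      exact Finset.sum_congr rfl (fun w' _ => (Nat.card_eq_fintype_card).symm)
    rw [hsig]
    have hinner : ∀ w' : PV (p^(e-1)) n, Nat.card {x : α // redP he x.1 = w'}
        = if ((∑ i, V'.out.1 i * w'.1 i = 0) ∧ ∑ i, w'.1 i * red p e U.out.1 i = 0)
          then p^(n-1) else 0 := by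
      intro w'
      by_cases hD1 : ∑ i, V'.out.1 i * w'.1 i = 0
      · have hE : {x : α // redP he x.1 = w'}
            ≃ {x : Fin n → ZMod (p^e) // red p e x = w'.1 ∧ ∑ i, x i * U.out.1 i = 0} :=
          { toFun := fun z => ⟨z.1.1.1,
              congrArg Subtype.val z.2, by rw [dot_comm]; exact z.1.2.1⟩,
            invFun := fun x => ⟨⟨⟨x.1, prim_lift he (by rw [x.2.1]; exact w'.2)⟩,
              ⟨by rw [dot_comm]; exact x.2.2, by
                have : red p e x.1 = w'.1 := x.2.1
                rw [this]; exact hD1⟩⟩, Subtype.ext x.2.1⟩,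
            left_inv := fun z => by
              apply Subtype.ext; apply Subtype.ext; rfl,
            right_inv := fun x => by apply Subtype.ext; rfl }
        rw [Nat.card_congr hE, lift_count he U.out.1 U.out.2 w'.1]
        by_cases hD2 : ∑ i, w'.1 i * red p e U.out.1 i = 0
        · rw [if_pos hD2, if_pos ⟨hD1, hD2⟩]
        · rw [if_neg hD2, if_neg (by tauto)]
      · have : IsEmpty {x : α // redP he x.1 = w'} := by
          constructor
          rintro ⟨⟨w, hw1, hw2⟩, hred⟩
          apply hD1
          have : red p e w.1 = w'.1 := congrArg Subtype.val hred
          rw [← this]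
          exact hw2
        rw [Nat.card_of_isEmpty, if_neg (by tauto)]
    rw [Finset.sum_congr rfl (fun w' _ => hinner w'), card_subtype_sum, Finset.mul_sum]
    refine Finset.sum_congr rfl (fun w' _ => ?_)
    by_cases hD : (∑ i, V'.out.1 i * w'.1 i = 0) ∧ ∑ i, w'.1 i * red p e U.out.1 i = 0
    · rw [if_pos hD, if_pos hD, mul_one]
    · rw [if_neg hD, if_neg hD, mul_zero]
  -- Step 7: reclassify at level e-1
  have step7 : Nat.card {w' : PV (p^(e-1)) n //
      (∑ i, V'.out.1 i * w'.1 i = 0) ∧ ∑ i, w'.1 i * red p e U.out.1 i = 0}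
      = G' * T := by
    rw [hT, ← card_class (e := e-1) he1' (fun W' =>
      orthoPt (p^(e-1)) n (redbar he U) W' ∧ orthoPt (p^(e-1)) n V' W')]
    apply Nat.card_congr
    refine Equiv.subtypeEquivRight (fun w' => ?_)
    have hUred : redbar he U = Quotient.mk (projSetoid (p^(e-1)) n) (redP he U.out) := by
      conv_lhs => rw [← U.out_eq]
      rfl
    have h1 : orthoPt (p^(e-1)) n (redbar he U) (Quotient.mk (projSetoid (p^(e-1)) n) w')
        ↔ ∑ i, w'.1 i * red p e U.out.1 i = 0 := by
      rw [hUred, orthoPt_iff (redP he U.out) w']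
      constructor
      · intro h; rw [dot_comm]; exact h
      · intro h; rw [dot_comm]; exact h
    have h2 : orthoPt (p^(e-1)) n V' (Quotient.mk (projSetoid (p^(e-1)) n) w')
        ↔ ∑ i, V'.out.1 i * w'.1 i = 0 := by
      conv_lhs => rw [← V'.out_eq]
      exact orthoPt_iff V'.out w'
    rw [h1, h2]
    tauto
  -- Assemble
  have main : G * (G * LHS) = G' * p^(n-1) * (p^(n-1) * (G' * T)) := by
    rw [step5, step6, step7]
  have hGr : G = p * G' := units_card_ratio he
  have hG'pos : 0 < G' := units_card_pos
  have hppos : 0 < p := hp.1.pos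
  rw [hGr] at main
  have main2 : (G' * G') * (p * p * LHS) = (G' * G') * (p^(n-1) * p^(n-1) * T) := by
    ring_nf
    ring_nf at main
    linarith [main]
  have main3 : p * p * LHS = p^(n-1) * p^(n-1) * T :=
    Nat.eq_of_mul_eq_mul_left (Nat.mul_pos hG'pos hG'pos) main2
  have hpow : p^(n-1) * p^(n-1) = p * p * p^(2*n-4) := by
    rw [← pow_add]
    have : p * p * p^(2*n-4) = p^(2 + (2*n-4)) := by rw [pow_add, pow_two]
    rw [this]
    congr 1
    omega
  have hfin : p * p * LHS = p * p * (p^(2*n-4) * T) := by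
    rw [main3, hpow]; ring
  exact Nat.eq_of_mul_eq_mul_left (Nat.mul_pos hppos hppos) hfin
end
theorem stmt16 (p e n : ℕ) [Fact p.Prime] (he : 2 ≤ e) (hn : 2 ≤ n) (lam : ℚ)
    (h : 0 < eigMult (Bmat (p^(e-1)) n) lam) :
    0 < eigMult (Bmat (p^e) n) ((p : ℚ)^(2*n-4) * lam) := by
  have he1 : (1:ℕ) ≤ e := by omega
  unfold eigMult at h
  have hnt := Module.finrank_pos_iff.mp h
  obtain ⟨v, hv⟩ := exists_ne (0 : (LinearMap.ker ((Bmat (p^(e-1)) n).mulVecLin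
    - lam • (LinearMap.id : (ProjPt (p^(e-1)) n → ℚ) →ₗ[ℚ] (ProjPt (p^(e-1)) n → ℚ)))))
  have hv2 : (Bmat (p^(e-1)) n).mulVecLin v.1 = lam • v.1 := by
    have := v.2
    rw [LinearMap.mem_ker, LinearMap.sub_apply, LinearMap.smul_apply, LinearMap.id_apply,
      sub_eq_zero] at this
    exact this
  have hv1 : v.1 ≠ 0 := fun hz => hv (Subtype.ext hz)
  obtain ⟨Y', hY'⟩ := Function.ne_iff.mp hv1
  set f : ProjPt (p^e) n → ℚ := fun Uc => v.1 (redbar he Uc) with hf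
  have key : (Bmat (p^e) n).mulVecLin f = ((p : ℚ)^(2*n-4) * lam) • f := by
    funext U
    rw [Matrix.mulVecLin_apply]
    show ∑ V, Bmat (p^e) n U V * f V = _
    rw [← Finset.sum_fiberwise Finset.univ (fun V => redbar he V)
      (fun V => Bmat (p^e) n U V * f V)]
    have hinner : ∀ V' : ProjPt (p^(e-1)) n,
        ∑ V ∈ Finset.filter (fun V => redbar he V = V') Finset.univ,
          Bmat (p^e) n U V * f V
        = (p : ℚ)^(2*n-4) * (Bmat (p^(e-1)) n (redbar he U) V' * v.1 V') := by
      intro V'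
      have h1 : ∀ V ∈ Finset.filter (fun V => redbar he V = V') Finset.univ,
          Bmat (p^e) n U V * f V = Bmat (p^e) n U V * v.1 V' := by
        intro V hV
        rw [hf]
        simp only
        rw [(Finset.mem_filter.mp hV).2]
      rw [Finset.sum_congr rfl h1, ← Finset.sum_mul]
      have h2 : ∑ V ∈ Finset.filter (fun V => redbar he V = V') Finset.univ,
          Bmat (p^e) n U V
          = ((∑ V : ProjPt (p^e) n, if redbar he V = V'
              then Nat.card {W : ProjPt (p^e) n //
                orthoPt (p^e) n U W ∧ orthoPt (p^e) n V W} else 0 : ℕ) : ℚ) := by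
        rw [Finset.sum_filter, Nat.cast_sum]
        refine Finset.sum_congr rfl (fun V _ => ?_)
        by_cases hr : redbar he V = V'
        · rw [if_pos hr, if_pos hr]; rfl
        · rw [if_neg hr, if_neg hr]; rfl
      rw [h2, star he hn U V']
      push_cast
      rw [mul_assoc]
      rfl
    rw [Finset.sum_congr rfl (fun V' _ => hinner V'), ← Finset.mul_sum]
    have h3 : ∑ V' : ProjPt (p^(e-1)) n, Bmat (p^(e-1)) n (redbar he U) V' * v.1 V'
        = lam * v.1 (redbar he U) := by
      have := congrFun hv2 (redbar he U)
      rw [Matrix.mulVecLin_apply] at this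
      exact this
    rw [h3]
    show (p : ℚ)^(2*n-4) * (lam * v.1 (redbar he U)) = ((p : ℚ)^(2*n-4) * lam) * f U
    rw [hf, mul_assoc]
  have hfne : f ≠ 0 := by
    intro hz
    apply hY'
    set w : PV (p^e) n := ⟨liftv p e Y'.out.1,
      prim_lift he (by rw [red_liftv he1]; exact Y'.out.2)⟩ with hw
    have hred : redbar he (Quotient.mk (projSetoid (p^e) n) w) = Y' := by
      rw [redbar_mk]
      have : redP he w = Y'.out := Subtype.ext (red_liftv he1 Y'.out.1)
      rw [this, Y'.out_eq]
    have := congrFun hz (Quotient.mk (projSetoid (p^e) n) w)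
    rw [hf] at this
    simp only at this
    rw [hred] at this
    exact this
  unfold eigMult
  apply Module.finrank_pos_iff.mpr
  refine nontrivial_of_ne ⟨f, ?_⟩ 0 ?_
  · rw [LinearMap.mem_ker, LinearMap.sub_apply, LinearMap.smul_apply, LinearMap.id_apply,
      key, sub_self]
  · intro hcontra
    exact hfne (congrArg Subtype.val hcontra)
end

section
/- Let p be a prime, e ≥ 2, n ≥ 2. Then p^{e(n-2)} is an eigenvalue of B_{n,p^e} with multiplicity at least (p^{n-1} − 1) · θ_{n,p^{e-1}}. -/
open scoped Classical

/-! ### Section A: ZMod p-power helpers -/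

section A
variable {p : ℕ} [hp : Fact p.Prime]

lemma isUnit_zmod_pow_iff {E : ℕ} (hE : E ≠ 0) (x : ZMod (p^E)) :
    IsUnit x ↔ ¬ p ∣ x.val := by
  haveI : NeZero (p^E) := ⟨pow_ne_zero _ hp.out.pos.ne'⟩
  conv_lhs => rw [← ZMod.natCast_rightInverse x]
  rw [ZMod.isUnit_iff_coprime, Nat.coprime_pow_right_iff (Nat.pos_of_ne_zero hE),
    Nat.coprime_comm, Nat.Prime.coprime_iff_not_dvd hp.out]

lemma exists_pow_mul_of_dvd_val {E k : ℕ} (x : ZMod (p^E)) (h : p^k ∣ x.val) :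
    ∃ y : ZMod (p^E), x = (p:ZMod (p^E))^k * y := by
  haveI : NeZero (p^E) := ⟨pow_ne_zero _ hp.out.pos.ne'⟩
  refine ⟨((x.val / p^k : ℕ) : ZMod (p^E)), ?_⟩
  have : ((p^k * (x.val / p^k) : ℕ) : ZMod (p^E)) = x := by
    rw [Nat.mul_div_cancel' h]; exact ZMod.natCast_rightInverse x
  conv_lhs => rw [← this]
  push_cast; ring

lemma dvd_val_of_not_isUnit {E : ℕ} (hE : E ≠ 0) (x : ZMod (p^E)) (h : ¬ IsUnit x) :
    p ∣ x.val := by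
  by_contra hd; exact h ((isUnit_zmod_pow_iff hE x).2 hd)

lemma exists_p_mul_of_not_isUnit {E : ℕ} (hE : E ≠ 0) (x : ZMod (p^E)) (h : ¬ IsUnit x) :
    ∃ y : ZMod (p^E), x = (p:ZMod (p^E)) * y := by
  obtain ⟨y, hy⟩ := exists_pow_mul_of_dvd_val (p := p) (k := 1) x
    (by simpa using dvd_val_of_not_isUnit hE x h)
  exact ⟨y, by simpa using hy⟩

lemma val_dvd_of_eq_pow_mul {E k : ℕ} (hk : k ≤ E) (x y : ZMod (p^E))
    (h : x = (p:ZMod (p^E))^k * y) : p^k ∣ x.val := by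
  haveI : NeZero (p^E) := ⟨pow_ne_zero _ hp.out.pos.ne'⟩
  subst h
  have : ((p^k * y.val : ℕ) : ZMod (p^E)) = (p:ZMod (p^E))^k * y := by
    push_cast; rw [ZMod.natCast_rightInverse y]
  rw [← this, ZMod.val_natCast]
  exact (Nat.dvd_mod_iff (pow_dvd_pow p hk)).2 (dvd_mul_right _ _)

end A

/-! ### Section B: dot products and primitivity -/

def dotv {m n : ℕ} (u w : Fin n → ZMod m) : ZMod m := ∑ i, u i * w i

section B
variable {p : ℕ} [hp : Fact p.Prime] {n : ℕ}

lemma primitive_iff {E : ℕ} (hE : E ≠ 0) (u : Fin n → ZMod (p^E)) :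
    Primitive u ↔ ∃ i, IsUnit (u i) := by
  unfold Primitive
  rw [show (Nat.gcd (Finset.univ.gcd fun i => (u i).val) (p^E) = 1)
      ↔ Nat.Coprime (Finset.univ.gcd fun i => (u i).val) (p^E) from Iff.rfl,
    Nat.coprime_pow_right_iff (Nat.pos_of_ne_zero hE), Nat.coprime_comm,
    Nat.Prime.coprime_iff_not_dvd hp.out, Finset.dvd_gcd_iff]
  push_neg
  constructor
  · rintro ⟨i, -, hi⟩; exact ⟨i, (isUnit_zmod_pow_iff hE _).2 hi⟩
  · rintro ⟨i, hi⟩; exact ⟨i, Finset.mem_univ i, (isUnit_zmod_pow_iff hE _).1 hi⟩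

lemma dotv_add_right {m : ℕ} (u w w' : Fin n → ZMod m) :
    dotv u (fun i => w i + w' i) = dotv u w + dotv u w' := by
  simp [dotv, mul_add, Finset.sum_add_distrib]

lemma dotv_smul_left {m : ℕ} (c : ZMod m) (u w : Fin n → ZMod m) :
    dotv (fun i => c * u i) w = c * dotv u w := by
  simp [dotv, Finset.mul_sum, mul_assoc]

lemma dotv_smul_right {m : ℕ} (c : ZMod m) (u w : Fin n → ZMod m) :
    dotv u (fun i => c * w i) = c * dotv u w := by
  simp [dotv, Finset.mul_sum]; apply Finset.sum_congr rfl; intros; ring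

lemma unit_cancel_s17 {m : ℕ} {a b x : ZMod m} (hx : IsUnit x) (h : a * x = b * x) : a = b := by
  obtain ⟨xu, rfl⟩ := hx
  calc a = a * xu * xu⁻¹ := by simp [mul_assoc]
  _ = b * xu * xu⁻¹ := by rw [h]
  _ = b := by simp [mul_assoc]

end B

/-! ### Section C: counting infrastructure -/

section C
variable {A B : Type*} [AddCommGroup A] [AddCommGroup B]

noncomputable def preimEquiv (f : A →+ B) (hf : Function.Surjective f) (T : B → Prop) :
    {x : A // T (f x)} ≃ {k : A // f k = 0} × {y : B // T y} where
  toFun x := (⟨x.1 - Function.surjInv hf (f x.1), by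
      simp [map_sub, Function.surjInv_eq hf]⟩, ⟨f x.1, x.2⟩)
  invFun kt := ⟨kt.1.1 + Function.surjInv hf kt.2.1, by
      simp only [map_add, kt.1.2, Function.surjInv_eq hf, zero_add]
      exact kt.2.2⟩
  left_inv x := Subtype.ext (by simp)
  right_inv kt := by
    have h1 : f (kt.1.1 + Function.surjInv hf kt.2.1) = kt.2.1 := by
      simp [map_add, kt.1.2, Function.surjInv_eq hf]
    refine Prod.ext (Subtype.ext ?_) (Subtype.ext ?_) <;> simp [h1]

lemma card_preim (f : A →+ B) (hf : Function.Surjective f) (T : B → Prop) :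
    Nat.card {x : A // T (f x)} = Nat.card {k : A // f k = 0} * Nat.card {y : B // T y} := by
  rw [Nat.card_congr (preimEquiv f hf T), Nat.card_prod]

lemma card_ker_mul (f : A →+ B) (hf : Function.Surjective f) :
    Nat.card A = Nat.card {k : A // f k = 0} * Nat.card B := by
  have := card_preim f hf (fun _ => True)
  rwa [Nat.card_congr (Equiv.subtypeUnivEquiv (fun _ => trivial)),
    Nat.card_congr (Equiv.subtypeUnivEquiv (fun _ => trivial))] at this

end C

section C2
variable {p : ℕ} [hp : Fact p.Prime]

lemma card_ann {E s : ℕ} (hE : E ≠ 0) :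
    Nat.card {z : ZMod (p^E) // (p:ZMod (p^E))^s * z = 0} = p^(min s E) := by
  haveI : NeZero (p^E) := ⟨pow_ne_zero _ hp.out.pos.ne'⟩
  set s' := min s E with hs'
  set t := E - s' with ht
  have hts' : t + s' = E := by omega
  have hple : (1:ℕ) ≤ p := hp.out.one_lt.le
  have hppos : 0 < p^t := pow_pos hp.out.pos t
  have hmem : ∀ z : ZMod (p^E), ((p:ZMod (p^E))^s * z = 0 ↔ p^t ∣ z.val) := by
    intro z
    constructor
    · intro h
      rcases le_or_gt E s with hse | hse
      · simp [ht, hs', min_eq_right hse]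
      · have hs'' : s' = s := by omega
        have hcast : ((p^s * z.val : ℕ) : ZMod (p^E)) = (p:ZMod (p^E))^s * z := by
          push_cast
          rw [ZMod.natCast_rightInverse z]
        rw [← hcast, ZMod.natCast_eq_zero_iff] at h
        have hfac : p^E = p^s * p^t := by rw [← pow_add]; congr 1; omega
        have h' : p^s * p^t ∣ p^s * z.val := by rw [← hfac]; exact h
        exact (mul_dvd_mul_iff_left (pow_ne_zero s hp.out.pos.ne')).1 h'
    · intro h
      obtain ⟨y, hy⟩ := exists_pow_mul_of_dvd_val (p := p) z h
      rw [hy, ← mul_assoc, ← pow_add]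
      have : ((p^(s+t) : ℕ) : ZMod (p^E)) = 0 := by
        rw [ZMod.natCast_eq_zero_iff]
        exact pow_dvd_pow p (by omega)
      push_cast at this
      rw [this, zero_mul]
  have hcongr : Nat.card {z : ZMod (p^E) // (p:ZMod (p^E))^s * z = 0}
      = Nat.card {z : ZMod (p^E) // p^t ∣ z.val} :=
    Nat.card_congr (Equiv.subtypeEquivRight hmem)
  rw [hcongr]
  have hEfac : p^t * p^s' = p^E := by rw [← pow_add, hts']
  have hlt : ∀ k : Fin (p^s'), p^t * (k:ℕ) < p^E := by
    intro k
    calc p^t * (k:ℕ) < p^t * p^s' := mul_lt_mul_of_pos_left k.2 hppos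
    _ = p^E := hEfac
  have e : Fin (p^s') ≃ {z : ZMod (p^E) // p^t ∣ z.val} := by
    refine ⟨fun k => ⟨((p^t * (k:ℕ) : ℕ) : ZMod (p^E)), ?_⟩,
      fun z => ⟨z.1.val / p^t, ?_⟩, ?_, ?_⟩
    · rw [ZMod.val_natCast]
      exact (Nat.dvd_mod_iff (Dvd.intro _ hEfac)).2 (dvd_mul_right _ _)
    · exact Nat.div_lt_of_lt_mul (by rw [hEfac]; exact ZMod.val_lt z.1)
    · intro k
      apply Fin.ext
      simp only
      rw [ZMod.val_natCast, Nat.mod_eq_of_lt (hlt k), Nat.mul_div_cancel_left _ hppos]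
    · intro z
      apply Subtype.ext
      simp only
      rw [Nat.mul_div_cancel' z.2]
      exact ZMod.natCast_rightInverse z.1
  rw [← Nat.card_congr e, Nat.card_eq_fintype_card, Fintype.card_fin]

def Indep2 {m n : ℕ} (a b : Fin n → ZMod m) : Prop :=
  ∃ i j : Fin n, IsUnit (a i * b j - a j * b i)

lemma dotv_single {m n : ℕ} (a : Fin n → ZMod m) (i : Fin n) (c : ZMod m) :
    dotv a (Pi.single i c) = a i * c := by
  simp only [dotv, Pi.single_apply, mul_ite, mul_zero]
  rw [Finset.sum_ite_eq' Finset.univ i (fun k => a k * c)]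
  simp

noncomputable def pairHom {m n : ℕ} (a b : Fin n → ZMod m) :
    (Fin n → ZMod m) →+ (ZMod m × ZMod m) :=
  AddMonoidHom.mk' (fun x => (dotv a x, dotv b x)) (by
    intro x y
    simp [dotv, Prod.ext_iff, mul_add, Finset.sum_add_distrib])

lemma dotv_single_add {m n : ℕ} (a : Fin n → ZMod m) (i j : Fin n) (c d : ZMod m) :
    dotv a (Pi.single i c + Pi.single j d) = a i * c + a j * d := by
  unfold dotv
  simp only [Pi.add_apply, mul_add, Finset.sum_add_distrib]
  exact congrArg₂ (· + ·) (dotv_single a i c) (dotv_single a j d)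

set_option linter.unusedSectionVars false in
set_option linter.unusedVariables false in
lemma pairHom_surj {E n : ℕ} (hE : E ≠ 0) (a b : Fin n → ZMod (p^E))
    (h : Indep2 a b) : Function.Surjective (pairHom a b) := by
  haveI : Fact (1 < p^E) := ⟨Nat.one_lt_pow hE hp.out.one_lt⟩
  obtain ⟨i, j, hΔ⟩ := h
  set Δ := a i * b j - a j * b i with hΔdef
  set ε := ((hΔ.unit⁻¹ : (ZMod (p^E))ˣ) : ZMod (p^E)) with hε
  have hΔε : Δ * ε = 1 := hΔ.mul_val_inv
  rintro ⟨α, β⟩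
  refine ⟨Pi.single i ((α * b j - β * a j) * ε) + Pi.single j ((β * a i - α * b i) * ε), ?_⟩
  have h1 : dotv a (Pi.single i ((α * b j - β * a j) * ε) + Pi.single j ((β * a i - α * b i) * ε))
      = α := by
    rw [dotv_single_add]
    linear_combination α * hΔε
  have h2 : dotv b (Pi.single i ((α * b j - β * a j) * ε) + Pi.single j ((β * a i - α * b i) * ε))
      = β := by
    rw [dotv_single_add]
    linear_combination β * hΔε
  exact Prod.ext h1 h2

lemma countC2 {E n : ℕ} (hE : E ≠ 0) (hn : 2 ≤ n) (a b : Fin n → ZMod (p^E))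
    (h : Indep2 a b) (s : ℕ) :
    Nat.card {x : Fin n → ZMod (p^E) // dotv a x = 0 ∧ (p:ZMod (p^E))^s * dotv b x = 0}
      = p^(E*(n-2)) * p^(min s E) := by
  haveI : NeZero (p^E) := ⟨pow_ne_zero _ hp.out.pos.ne'⟩
  have hsurj := pairHom_surj hE a b h
  have key := card_preim (pairHom a b) hsurj (fun y => y.1 = 0 ∧ (p:ZMod (p^E))^s * y.2 = 0)
  have hT : Nat.card {y : ZMod (p^E) × ZMod (p^E) // y.1 = 0 ∧ (p:ZMod (p^E))^s * y.2 = 0}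
      = p^(min s E) := by
    rw [← card_ann (p := p) (E := E) (s := s) hE]
    refine Nat.card_congr ⟨fun y => ⟨y.1.2, y.2.2⟩, fun z => ⟨(0, z.1), rfl, z.2⟩, ?_, ?_⟩
    · rintro ⟨⟨y1, y2⟩, h1, h2⟩
      exact Subtype.ext (Prod.ext h1.symm rfl)
    · rintro ⟨z, hz⟩; rfl
  have hker : Nat.card {k : Fin n → ZMod (p^E) // pairHom a b k = 0} = p^(E*(n-2)) := by
    have hfull := card_ker_mul (pairHom a b) hsurj
    have h1 : Nat.card (Fin n → ZMod (p^E)) = p^(E*n) := by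
      rw [Nat.card_pi]
      simp [Nat.card_zmod, Finset.prod_const, ← pow_mul, mul_comm]
    have h2 : Nat.card (ZMod (p^E) × ZMod (p^E)) = p^(2*E) := by
      rw [Nat.card_prod, Nat.card_zmod, ← pow_add]
      congr 1; omega
    rw [h1, h2] at hfull
    have hsplit : p^(E*n) = p^(E*(n-2)) * p^(2*E) := by
      rw [← pow_add]; congr 1
      have : E*(n-2) + 2*E = E*((n-2) + 2) := by ring
      rw [this, Nat.sub_add_cancel hn]
    rw [hsplit] at hfull
    exact (Nat.eq_of_mul_eq_mul_right (pow_pos hp.out.pos _) hfull.symm)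
  calc Nat.card {x : Fin n → ZMod (p^E) // dotv a x = 0 ∧ (p:ZMod (p^E))^s * dotv b x = 0}
      = Nat.card {x : Fin n → ZMod (p^E) //
          (pairHom a b x).1 = 0 ∧ (p:ZMod (p^E))^s * (pairHom a b x).2 = 0} :=
        Nat.card_congr (Equiv.subtypeEquivRight (fun x => Iff.rfl))
  _ = p^(E*(n-2)) * p^(min s E) := by rw [card_preim (pairHom a b) hsurj
        (fun y => y.1 = 0 ∧ (p:ZMod (p^E))^s * y.2 = 0), hker, hT]

end C2

/-! ### Section D: lifting multiplication by p, non-primitive solutions -/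

section D
variable {p : ℕ} [hp : Fact p.Prime] {e : ℕ}

noncomputable def qmap (p e : ℕ) : ZMod (p^e) →+* ZMod (p^(e-1)) :=
  ZMod.castHom (pow_dvd_pow p (Nat.sub_le e 1)) (ZMod (p^(e-1)))

lemma qmap_apply (z : ZMod (p^e)) : qmap p e z = ((z.val : ℕ) : ZMod (p^(e-1))) := by
  haveI : NeZero (p^e) := ⟨pow_ne_zero _ hp.out.pos.ne'⟩
  rw [qmap, ZMod.castHom_apply]
  exact (ZMod.natCast_val z).symm

noncomputable def phimap (p e : ℕ) [Fact p.Prime] (he : 1 ≤ e) : ZMod (p^(e-1)) →+ ZMod (p^e) :=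
  ZMod.lift (p^(e-1)) ⟨AddMonoidHom.mk' (fun z : ℤ => (p : ZMod (p^e)) * (z : ZMod (p^e)))
    (by intro x y; push_cast; ring), by
      simp only [AddMonoidHom.mk'_apply]
      push_cast
      rw [mul_comm, ← pow_succ, show e - 1 + 1 = e from by omega]
      exact_mod_cast ZMod.natCast_self (p^e)⟩

variable (he : 1 ≤ e)

lemma phimap_qmap (z : ZMod (p^e)) : phimap p e he (qmap p e z) = (p : ZMod (p^e)) * z := by
  haveI : NeZero (p^e) := ⟨pow_ne_zero _ hp.out.pos.ne'⟩
  have hz : ((z.val : ℤ) : ZMod (p^e)) = z := by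
    push_cast; exact ZMod.natCast_rightInverse z
  have hq : qmap p e z = ((z.val : ℤ) : ZMod (p^(e-1))) := by
    rw [qmap_apply]; push_cast; rfl
  rw [hq, phimap, ZMod.lift_coe]
  simp only [AddMonoidHom.mk'_apply, hz]

lemma qmap_surj : Function.Surjective (qmap p e) := by
  haveI : NeZero (p^(e-1)) := ⟨pow_ne_zero _ hp.out.pos.ne'⟩
  intro x
  exact ⟨((x.val : ℕ) : ZMod (p^e)), by rw [map_natCast]; exact ZMod.natCast_rightInverse x⟩

lemma phimap_inj : Function.Injective (phimap p e he) := by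
  haveI : NeZero (p^e) := ⟨pow_ne_zero _ hp.out.pos.ne'⟩
  haveI : NeZero (p^(e-1)) := ⟨pow_ne_zero _ hp.out.pos.ne'⟩
  have h0 : ∀ x, phimap p e he x = 0 → x = 0 := by
    intro x hx
    obtain ⟨z, rfl⟩ := qmap_surj (p := p) (e := e) x
    rw [phimap_qmap] at hx
    have h1 : ((p * z.val : ℕ) : ZMod (p^e)) = 0 := by
      push_cast
      rw [ZMod.natCast_rightInverse z]
      exact hx
    rw [ZMod.natCast_eq_zero_iff] at h1
    have hfac : p^e = p * p^(e-1) := by rw [← pow_succ']; congr 1; omega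
    have h2 : p * p^(e-1) ∣ p * z.val := by rw [← hfac]; exact h1
    have hdvd : p^(e-1) ∣ z.val := (mul_dvd_mul_iff_left hp.out.pos.ne').1 h2
    rw [qmap_apply, ZMod.natCast_eq_zero_iff]
    exact hdvd
  intro x y hxy
  have h1 : phimap p e he (x - y) = 0 := by rw [map_sub, hxy, sub_self]
  exact sub_eq_zero.mp (h0 _ h1)

lemma phimap_mul (x : ZMod (p^(e-1))) (c : ZMod (p^e)) :
    phimap p e he (x * qmap p e c) = phimap p e he x * c := by
  obtain ⟨z, rfl⟩ := qmap_surj (p := p) (e := e) x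
  rw [← map_mul, phimap_qmap, phimap_qmap]
  ring

lemma not_isUnit_iff_phimap {x : ZMod (p^e)} (hE : e ≠ 0) :
    ¬ IsUnit x ↔ ∃ y, x = phimap p e he y := by
  constructor
  · intro h
    obtain ⟨w, hw⟩ := exists_p_mul_of_not_isUnit hE x h
    exact ⟨qmap p e w, by rw [phimap_qmap]; exact hw⟩
  · rintro ⟨y, rfl⟩
    obtain ⟨z, rfl⟩ := qmap_surj (p := p) (e := e) y
    rw [phimap_qmap]
    rw [isUnit_zmod_pow_iff hE]
    intro hnd
    haveI : NeZero (p^e) := ⟨pow_ne_zero _ hp.out.pos.ne'⟩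
    apply hnd
    have : ((p * z.val : ℕ) : ZMod (p^e)) = (p:ZMod (p^e)) * z := by
      push_cast; rw [ZMod.natCast_rightInverse z]
    rw [← this, ZMod.val_natCast]
    exact (Nat.dvd_mod_iff (dvd_pow_self p hE)).2 (dvd_mul_right _ _)

end D

/-! ### Section E: the main primitive-solution count -/

section E
variable {p : ℕ} [hp : Fact p.Prime] {e n : ℕ}

lemma dotv_phimap (he : 1 ≤ e) (a : Fin n → ZMod (p^e)) (y : Fin n → ZMod (p^(e-1))) :
    dotv a (fun i => phimap p e he (y i))
      = phimap p e he (dotv (fun i => qmap p e (a i)) y) := by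
  unfold dotv
  rw [map_sum]
  refine Finset.sum_congr rfl (fun i _ => ?_)
  calc a i * phimap p e he (y i) = phimap p e he (y i) * a i := mul_comm _ _
  _ = phimap p e he (y i * qmap p e (a i)) := (phimap_mul he _ _).symm
  _ = phimap p e he (qmap p e (a i) * y i) := by rw [mul_comm]

lemma phimap_pow_p (he : 1 ≤ e) (s : ℕ) (w : ZMod (p^(e-1))) :
    phimap p e he ((p : ZMod (p^(e-1)))^s * w) = (p : ZMod (p^e))^s * phimap p e he w := by
  have hq : qmap p e ((p : ZMod (p^e))^s) = (p : ZMod (p^(e-1)))^s := by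
    rw [map_pow, map_natCast]
  calc phimap p e he ((p : ZMod (p^(e-1)))^s * w)
      = phimap p e he (w * qmap p e ((p : ZMod (p^e))^s)) := by rw [hq, mul_comm]
  _ = phimap p e he w * (p : ZMod (p^e))^s := phimap_mul he _ _
  _ = (p : ZMod (p^e))^s * phimap p e he w := mul_comm _ _

/-- The non-primitive solutions correspond to solutions one level down. -/
lemma card_nonprim (he : 1 ≤ e) (a b : Fin n → ZMod (p^e)) (s : ℕ) :
    Nat.card {x : Fin n → ZMod (p^e) //
        ¬ Primitive x ∧ dotv a x = 0 ∧ (p:ZMod (p^e))^s * dotv b x = 0}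
      = Nat.card {y : Fin n → ZMod (p^(e-1)) //
        dotv (fun i => qmap p e (a i)) y = 0
          ∧ (p:ZMod (p^(e-1)))^s * dotv (fun i => qmap p e (b i)) y = 0} := by
  have hE : e ≠ 0 := by omega
  symm
  refine Nat.card_congr (Equiv.ofBijective (fun y => ⟨fun i => phimap p e he (y.1 i), ?_, ?_, ?_⟩) ⟨?_, ?_⟩)
  · rw [primitive_iff hE]
    push_neg
    intro i
    rw [not_isUnit_iff_phimap he hE]
    exact ⟨y.1 i, rfl⟩
  · rw [dotv_phimap he, y.2.1, map_zero]
  · rw [dotv_phimap he, ← phimap_pow_p he, y.2.2, map_zero]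
  · intro y z hyz
    apply Subtype.ext
    funext i
    have := congrFun (congrArg Subtype.val hyz) i
    exact phimap_inj he this
  · rintro ⟨x, hx1, hx2, hx3⟩
    have hall : ∀ i, ∃ y, x i = phimap p e he y := by
      intro i
      rw [← not_isUnit_iff_phimap he hE]
      rw [primitive_iff hE] at hx1
      push_neg at hx1
      exact hx1 i
    choose y hy using hall
    have hxy : x = fun i => phimap p e he (y i) := funext hy
    have h2 : dotv (fun i => qmap p e (a i)) y = 0 := by
      apply phimap_inj he
      rw [← dotv_phimap he, ← hxy, hx2, map_zero]
    have h3 : (p:ZMod (p^(e-1)))^s * dotv (fun i => qmap p e (b i)) y = 0 := by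
      apply phimap_inj he
      rw [phimap_pow_p he, ← dotv_phimap he, ← hxy, hx3, map_zero]
    exact ⟨⟨y, h2, h3⟩, Subtype.ext hxy.symm⟩

lemma card_split {α : Type*} [Fintype α] (P C : α → Prop) :
    Nat.card {x : α // C x}
      = Nat.card {x : α // P x ∧ C x} + Nat.card {x : α // ¬ P x ∧ C x} := by
  rw [← Nat.card_sum]
  refine Nat.card_congr ⟨fun x => if h : P x.1 then .inl ⟨x.1, h, x.2⟩ else .inr ⟨x.1, h, x.2⟩,
    Sum.elim (fun x => ⟨x.1, x.2.2⟩) (fun x => ⟨x.1, x.2.2⟩), ?_, ?_⟩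
  · intro x
    by_cases h : P x.1 <;> simp [h]
  · rintro (⟨x, hx, hc⟩ | ⟨x, hx, hc⟩) <;> simp [hx]

lemma indep2_qmap (a b : Fin n → ZMod (p^e)) (h : Indep2 a b) :
    Indep2 (fun i => qmap p e (a i)) (fun i => qmap p e (b i)) := by
  obtain ⟨i, j, hu⟩ := h
  exact ⟨i, j, by simpa [map_mul, map_sub] using hu.map (qmap p e)⟩

/-- MAIN COUNT: number of primitive solutions. -/
lemma countPrim (he : 2 ≤ e) (hn : 2 ≤ n) (a b : Fin n → ZMod (p^e))
    (hab : Indep2 a b) (s : ℕ) :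
    Nat.card {x : Fin n → ZMod (p^e) //
        Primitive x ∧ dotv a x = 0 ∧ (p:ZMod (p^e))^s * dotv b x = 0}
      = p^(e*(n-2)) * p^(min s e) - p^((e-1)*(n-2)) * p^(min s (e-1)) := by
  have h1 : e ≠ 0 := by omega
  have h2 : e - 1 ≠ 0 := by omega
  have hsplit := card_split (α := Fin n → ZMod (p^e)) Primitive
    (fun x => dotv a x = 0 ∧ (p:ZMod (p^e))^s * dotv b x = 0)
  rw [countC2 h1 hn a b hab s] at hsplit
  rw [card_nonprim (by omega) a b s,
    countC2 h2 hn _ _ (indep2_qmap a b hab) s] at hsplit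
  omega

end E

/-! ### Section F: from projective counts to vector counts -/

section F
variable {p : ℕ} [hp : Fact p.Prime] {e n : ℕ}

lemma primitive_smul (he : e ≠ 0) {x : Fin n → ZMod (p^e)} (lam : (ZMod (p^e))ˣ)
    (hx : Primitive x) : Primitive (fun i => (lam : ZMod (p^e)) * x i) := by
  rw [primitive_iff he] at hx ⊢
  obtain ⟨i, hi⟩ := hx
  exact ⟨i, (Units.isUnit lam).mul hi⟩

lemma orthoPt_iff_s17 {m : ℕ} (U W : ProjPt m n) (u w : {x : Fin n → ZMod m // Primitive x})
    (hu : Quotient.mk (projSetoid m n) u = U) (hw : Quotient.mk (projSetoid m n) w = W) :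
    orthoPt m n U W ↔ dotv u.1 w.1 = 0 := by
  constructor
  · intro h; exact h u w hu hw
  · intro h u' w' hu' hw'
    obtain ⟨lam, hl⟩ : assoc u'.1 u.1 := Quotient.exact (hu'.trans hu.symm)
    obtain ⟨mu, hm⟩ : assoc w'.1 w.1 := Quotient.exact (hw'.trans hw.symm)
    have key : dotv u.1 w.1 = dotv u'.1 w'.1 * ((lam : ZMod m) * mu) := by
      rw [hl, hm]
      unfold dotv
      rw [Finset.sum_mul]
      exact Finset.sum_congr rfl (fun i _ => by ring)
    have h2 : dotv u'.1 w'.1 * ((lam : ZMod m) * mu) = 0 * ((lam : ZMod m) * mu) := by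
      rw [← key, h, zero_mul]
    exact unit_cancel_s17 ((Units.isUnit lam).mul (Units.isUnit mu)) h2

lemma card_units_pow : Nat.card (ZMod (p^e))ˣ = (p^e).totient := by
  haveI : NeZero (p^e) := ⟨pow_ne_zero _ hp.out.pos.ne'⟩
  rw [Nat.card_eq_fintype_card, ZMod.card_units_eq_totient]

/-- Entry of `Bmat` times the unit count equals a primitive-vector count. -/
lemma B_entry_count (he : e ≠ 0) (W U : ProjPt (p^e) n)
    (w u : {x : Fin n → ZMod (p^e) // Primitive x})
    (hw : Quotient.mk (projSetoid (p^e) n) w = W) (hu : Quotient.mk (projSetoid (p^e) n) u = U) :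
    (p^e).totient * Nat.card {X : ProjPt (p^e) n // orthoPt (p^e) n W X ∧ orthoPt (p^e) n U X}
      = Nat.card {x : Fin n → ZMod (p^e) //
          Primitive x ∧ dotv w.1 x = 0 ∧ dotv u.1 x = 0} := by
  rw [← card_units_pow, ← Nat.card_prod]
  refine Nat.card_congr (Equiv.ofBijective
    (fun lX => ⟨fun i => (lX.1 : ZMod (p^e)) * (lX.2.1.out).1 i, ?_, ?_, ?_⟩) ⟨?_, ?_⟩)
  · exact primitive_smul he lX.1 (lX.2.1.out).2
  · rw [dotv_smul_right,
      (orthoPt_iff_s17 W lX.2.1 w lX.2.1.out hw (Quotient.out_eq _)).1 lX.2.2.1, mul_zero]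
  · rw [dotv_smul_right,
      (orthoPt_iff_s17 U lX.2.1 u lX.2.1.out hu (Quotient.out_eq _)).1 lX.2.2.2, mul_zero]
  · rintro ⟨lam, X⟩ ⟨mu, Y⟩ hxy
    have hfun : (fun i => (lam : ZMod (p^e)) * (X.1.out).1 i)
        = (fun i => (mu : ZMod (p^e)) * (Y.1.out).1 i) :=
      congrArg Subtype.val hxy
    have hXY : X.1 = Y.1 := by
      rw [← Quotient.out_eq X.1, ← Quotient.out_eq Y.1]
      apply Quotient.sound
      show assoc (X.1.out).1 (Y.1.out).1
      refine ⟨mu⁻¹ * lam, funext fun i => ?_⟩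
      have := congrFun hfun i
      calc (Y.1.out).1 i = ((mu⁻¹ : (ZMod (p^e))ˣ) : ZMod (p^e)) * ((mu : ZMod (p^e)) * (Y.1.out).1 i) := by
            rw [← mul_assoc, ← Units.val_mul, inv_mul_cancel]; simp
      _ = ((mu⁻¹ * lam : (ZMod (p^e))ˣ) : ZMod (p^e)) * (X.1.out).1 i := by
            rw [← this, Units.val_mul, mul_assoc]
    have houtXY : X.1.out = Y.1.out := by rw [hXY]
    have hlammu : lam = mu := by
      obtain ⟨i, hi⟩ := (primitive_iff he _).1 (X.1.out).2
      have h1 := congrFun hfun i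
      rw [← houtXY] at h1
      exact Units.ext (unit_cancel_s17 hi h1)
    have : X = Y := Subtype.ext hXY
    rw [hlammu, this]
  · rintro ⟨x, hprim, hw0, hu0⟩
    set X : ProjPt (p^e) n := Quotient.mk (projSetoid (p^e) n) ⟨x, hprim⟩ with hX
    have hoW : orthoPt (p^e) n W X :=
      (orthoPt_iff_s17 W X w ⟨x, hprim⟩ hw hX.symm).2 hw0
    have hoU : orthoPt (p^e) n U X :=
      (orthoPt_iff_s17 U X u ⟨x, hprim⟩ hu hX.symm).2 hu0
    obtain ⟨lam, hl⟩ : assoc (X.out).1 x := by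
      have : Quotient.mk (projSetoid (p^e) n) X.out
          = Quotient.mk (projSetoid (p^e) n) ⟨x, hprim⟩ := by
        rw [Quotient.out_eq, hX]
      exact Quotient.exact this
    refine ⟨⟨lam, ⟨X, hoW, hoU⟩⟩, Subtype.ext ?_⟩
    exact hl.symm

end F

/-! ### Section G: helpers on reduction mod p -/

section G
variable {p : ℕ} [hp : Fact p.Prime] {e n : ℕ}

noncomputable def pr1 (p : ℕ) {e : ℕ} (he' : e ≠ 0) : ZMod (p^e) →+* ZMod p :=
  ZMod.castHom (dvd_pow_self p he') (ZMod p)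

lemma pr1_eq_zero_iff (he' : e ≠ 0) (x : ZMod (p^e)) :
    pr1 p he' x = 0 ↔ p ∣ x.val := by
  haveI : NeZero (p^e) := ⟨pow_ne_zero _ hp.out.pos.ne'⟩
  haveI : NeZero p := ⟨hp.out.pos.ne'⟩
  have : pr1 p he' x = ((x.val : ℕ) : ZMod p) := by
    rw [pr1, ZMod.castHom_apply]
    exact (ZMod.natCast_val x).symm
  rw [this, ZMod.natCast_eq_zero_iff]

lemma isUnit_iff_pr1 (he' : e ≠ 0) (x : ZMod (p^e)) :
    IsUnit x ↔ pr1 p he' x ≠ 0 := by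
  rw [isUnit_zmod_pow_iff he']
  exact not_congr (pr1_eq_zero_iff he' x).symm

lemma pr1_p (he' : e ≠ 0) : pr1 p he' ((p : ZMod (p^e))) = 0 := by
  rw [map_natCast]
  exact ZMod.natCast_self p

lemma pr1_pow_mul (he' : e ≠ 0) {k : ℕ} (hk : 1 ≤ k) (z : ZMod (p^e)) :
    pr1 p he' ((p : ZMod (p^e))^k * z) = 0 := by
  rw [map_mul, map_pow, pr1_p he', zero_pow (by omega), zero_mul]

lemma isUnit_add_pow (he' : e ≠ 0) {k : ℕ} (hk : 1 ≤ k) {c : ZMod (p^e)} (hc : IsUnit c)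
    (z : ZMod (p^e)) : IsUnit (c + (p : ZMod (p^e))^k * z) := by
  rw [isUnit_iff_pr1 he'] at hc ⊢
  rw [map_add, pr1_pow_mul he' hk, add_zero]
  exact hc

/-- If all 2x2 minors of a primitive `u` against `b` are non-units, then
`b` is congruent mod `p` to a multiple of `u`. -/
lemma not_indep2_decomp (he' : e ≠ 0) {u b : Fin n → ZMod (p^e)} (hu : Primitive u)
    (hni : ¬ Indep2 u b) :
    ∃ (t : ZMod (p^e)) (m : Fin n → ZMod (p^e)),
      ∀ j, b j = t * u j + (p : ZMod (p^e)) * m j := by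
  unfold Indep2 at hni
  push_neg at hni
  obtain ⟨i, hi⟩ := (primitive_iff he' u).1 hu
  set ε := ((hi.unit⁻¹ : (ZMod (p^e))ˣ) : ZMod (p^e)) with hε
  have hεu : u i * ε = 1 := hi.mul_val_inv
  set t := b i * ε with ht
  have hkey : ∀ j, ∃ mj, b j - t * u j = (p : ZMod (p^e)) * mj := by
    intro j
    obtain ⟨y, hy⟩ := exists_p_mul_of_not_isUnit he' _ (hni i j)
    refine ⟨ε * y, ?_⟩
    have : b j - t * u j = ε * (u i * b j - u j * b i) := by
      rw [ht]
      calc b j - b i * ε * u j = b j * (u i * ε) - b i * ε * u j := by rw [hεu, mul_one]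
      _ = ε * (u i * b j - u j * b i) := by ring
    rw [this, hy]
    ring
  choose m hm using hkey
  refine ⟨t, m, fun j => ?_⟩
  have := hm j
  linear_combination this

lemma indep2_neg_symm {m' : ℕ} {a b : Fin n → ZMod m'} (h : ¬ Indep2 a b) : ¬ Indep2 b a := by
  intro ⟨i, j, hij⟩
  exact h ⟨i, j, by
    have : a i * b j - a j * b i = -(b i * a j - b j * a i) := by ring
    rw [this]
    exact hij.neg⟩

/-- If `v = c•u + p^(e-1)•m` with `c` a unit and the minors of `(u,m)` all non-units,
then `v` is associate to `u`. -/
lemma assoc_of_top (he : 2 ≤ e) {u v m : Fin n → ZMod (p^e)} (hu : Primitive u)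
    {c : ZMod (p^e)} (hc : IsUnit c)
    (hv : ∀ j, v j = c * u j + (p : ZMod (p^e))^(e-1) * m j)
    (hni : ¬ Indep2 u m) : assoc u v := by
  have he' : e ≠ 0 := by omega
  obtain ⟨t, m', hm'⟩ := not_indep2_decomp he' hu hni
  have hpe : (p : ZMod (p^e))^e = 0 := by
    have : ((p^e : ℕ) : ZMod (p^e)) = 0 := ZMod.natCast_self _
    rw [← this]; push_cast; ring
  have hunit : IsUnit (c + (p : ZMod (p^e))^(e-1) * t) := isUnit_add_pow he' (by omega) hc t
  refine ⟨hunit.unit, funext fun j => ?_⟩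
  rw [IsUnit.unit_spec]
  rw [hv j, hm' j]
  have hcomb : (p : ZMod (p^e))^(e-1) * ((p : ZMod (p^e)) * m' j) = 0 := by
    rw [← mul_assoc, ← pow_succ, show e - 1 + 1 = e from by omega, hpe, zero_mul]
  calc c * u j + (p : ZMod (p^e))^(e-1) * (t * u j + (p : ZMod (p^e)) * m' j)
      = (c + (p : ZMod (p^e))^(e-1) * t) * u j
        + (p : ZMod (p^e))^(e-1) * ((p : ZMod (p^e)) * m' j) := by ring
  _ = (c + (p : ZMod (p^e))^(e-1) * t) * u j := by rw [hcomb, add_zero]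

lemma indep2_congr_mod_p (he' : e ≠ 0) {a a' b b' : Fin n → ZMod (p^e)}
    (ha : ∀ j, pr1 p he' (a j) = pr1 p he' (a' j))
    (hb : ∀ j, pr1 p he' (b j) = pr1 p he' (b' j)) (h : Indep2 a b) : Indep2 a' b' := by
  obtain ⟨i, j, hij⟩ := h
  refine ⟨i, j, ?_⟩
  rw [isUnit_iff_pr1 he'] at hij ⊢
  rw [map_sub, map_mul, map_mul, ← ha, ← hb, ← ha, ← hb, ← map_mul, ← map_mul, ← map_sub]
  exact hij

lemma dotv_comb {m' : ℕ} (c γ : ZMod m') (u w x : Fin n → ZMod m') :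
    dotv (fun i => c * u i + γ * w i) x = c * dotv u x + γ * dotv w x := by
  unfold dotv
  rw [Finset.mul_sum, Finset.mul_sum, ← Finset.sum_add_distrib]
  exact Finset.sum_congr rfl (fun i _ => by ring)

end G

/-! ### Section H: the key counting identities -/

noncomputable def Fcount {m n : ℕ} (w u : Fin n → ZMod m) : ℕ :=
  Nat.card {x : Fin n → ZMod m // Primitive x ∧ dotv w x = 0 ∧ dotv u x = 0}

section H
variable {p : ℕ} [hp : Fact p.Prime] {e n : ℕ}

lemma Fcount_eq_formula (he : 2 ≤ e) (hn : 2 ≤ n) (w u a b : Fin n → ZMod (p^e)) (s : ℕ)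
    (hab : Indep2 a b)
    (hiff : ∀ x : Fin n → ZMod (p^e),
      (dotv w x = 0 ∧ dotv u x = 0) ↔ (dotv a x = 0 ∧ (p:ZMod (p^e))^s * dotv b x = 0)) :
    Fcount w u = p^(e*(n-2)) * p^(min s e) - p^((e-1)*(n-2)) * p^(min s (e-1)) := by
  unfold Fcount
  rw [Nat.card_congr (Equiv.subtypeEquivRight (fun x => and_congr Iff.rfl (hiff x)))]
  exact countPrim he hn a b hab s

lemma pr1_eq_of_top (he : 2 ≤ e) {u v d : Fin n → ZMod (p^e)}
    (hd : ∀ j, v j = u j + (p:ZMod (p^e))^(e-1) * d j) :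
    ∀ j, pr1 p (show e ≠ 0 by omega) (u j) = pr1 p (show e ≠ 0 by omega) (v j) := by
  intro j
  rw [hd j, map_add, pr1_pow_mul _ (by omega), add_zero]

lemma Fcount_step (he : 2 ≤ e) (hn : 2 ≤ n) {u v w d : Fin n → ZMod (p^e)}
    (hu : Primitive u) (hv : Primitive v) (hw : Primitive w)
    (hd : ∀ j, v j = u j + (p:ZMod (p^e))^(e-1) * d j)
    (hWU : ¬ assoc u w) (hWV : ¬ assoc v w) :
    ∀ j k, j + k = e → 1 ≤ k → ∀ (c : ZMod (p^e)), IsUnit c →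
      ∀ m : Fin n → ZMod (p^e), (∀ i, w i = c * u i + (p:ZMod (p^e))^k * m i) →
        Fcount w u = Fcount w v := by
  have he' : e ≠ 0 := by omega
  have hpe : (p : ZMod (p^e))^e = 0 := by
    have : ((p^e : ℕ) : ZMod (p^e)) = 0 := ZMod.natCast_self _
    rw [← this]; push_cast; ring
  intro j
  induction j with
  | zero =>
    intro k hk _ c hc m hwm
    exfalso
    apply hWU
    refine ⟨hc.unit, funext fun i => ?_⟩
    rw [IsUnit.unit_spec, hwm i]
    have hk' : k = e := by omega
    rw [hk', hpe, zero_mul, add_zero]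
  | succ j ih =>
    intro k hjk hk1 c hc m hwm
    have hkle : k ≤ e - 1 := by omega
    by_cases him : Indep2 u m
    · -- direct computation on both sides
      set m' : Fin n → ZMod (p^e) := fun i => m i - c * ((p:ZMod (p^e))^(e-1-k) * d i) with hm'
      have hpw : (p:ZMod (p^e))^k * (p:ZMod (p^e))^(e-1-k) = (p:ZMod (p^e))^(e-1) := by
        rw [← pow_add]; congr 1; omega
      have hwv : ∀ i, w i = c * v i + (p:ZMod (p^e))^k * m' i := by
        intro i
        rw [hd i, hm']
        have := hwm i
        calc w i = c * u i + (p:ZMod (p^e))^k * m i := this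
        _ = c * (u i + (p:ZMod (p^e))^(e-1) * d i)
              + (p:ZMod (p^e))^k * (m i - c * ((p:ZMod (p^e))^(e-1-k) * d i)) := by
            rw [← hpw]; ring
      have hvm' : Indep2 v m' := by
        rcases Nat.lt_or_ge k (e-1) with hklt | hkge
        · -- k ≤ e-2 : congruence mod p
          refine indep2_congr_mod_p he' (pr1_eq_of_top he hd) (fun j => ?_) him
          have hgoal : pr1 p he' (m' j) = pr1 p he' (m j) := by
            rw [hm']
            simp only
            rw [map_sub, map_mul, pr1_pow_mul he' (by omega) (d j), mul_zero, sub_zero]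
          exact hgoal.symm
        · -- k = e-1 : otherwise w would be associate to v
          by_contra hni2
          exact hWV (assoc_of_top he hv hc
            (fun i => by rw [hwv i, show e - 1 = k from by omega]) hni2)
      have h1 : Fcount w u = p^(e*(n-2)) * p^(min k e) - p^((e-1)*(n-2)) * p^(min k (e-1)) := by
        refine Fcount_eq_formula he hn w u u m k him (fun x => ?_)
        have hdw : dotv w x = c * dotv u x + (p:ZMod (p^e))^k * dotv m x := by
          rw [show w = fun i => c * u i + (p:ZMod (p^e))^k * m i from funext hwm]
          exact dotv_comb _ _ _ _ _
        constructor
        · rintro ⟨h1, h2⟩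
          refine ⟨h2, ?_⟩
          rw [h2, mul_zero, zero_add] at hdw
          rw [← hdw, h1]
        · rintro ⟨h1, h2⟩
          exact ⟨by rw [hdw, h1, h2, mul_zero, add_zero], h1⟩
      have h2 : Fcount w v = p^(e*(n-2)) * p^(min k e) - p^((e-1)*(n-2)) * p^(min k (e-1)) := by
        refine Fcount_eq_formula he hn w v v m' k hvm' (fun x => ?_)
        have hdw : dotv w x = c * dotv v x + (p:ZMod (p^e))^k * dotv m' x := by
          rw [show w = fun i => c * v i + (p:ZMod (p^e))^k * m' i from funext hwv]
          exact dotv_comb _ _ _ _ _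
        constructor
        · rintro ⟨h1, h2⟩
          refine ⟨h2, ?_⟩
          rw [h2, mul_zero, zero_add] at hdw
          rw [← hdw, h1]
        · rintro ⟨h1, h2⟩
          exact ⟨by rw [hdw, h1, h2, mul_zero, add_zero], h1⟩
      rw [h1, h2]
    · -- descend
      obtain ⟨t, m'', hm''⟩ := not_indep2_decomp he' hu him
      refine ih (k+1) (by omega) (by omega) (c + (p:ZMod (p^e))^k * t)
        (isUnit_add_pow he' hk1 hc t) m'' (fun i => ?_)
      rw [hwm i, hm'' i, pow_succ]
      ring
end H

section I
variable {p : ℕ} [hp : Fact p.Prime] {e n : ℕ}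

lemma assoc_symm {m : ℕ} {a b : Fin n → ZMod m} (h : assoc a b) : assoc b a := by
  obtain ⟨l, hl⟩ := h
  refine ⟨l⁻¹, funext fun i => ?_⟩
  rw [hl]
  simp [← mul_assoc]

lemma Fcount_offdiag (he : 2 ≤ e) (hn : 2 ≤ n) {u v w d : Fin n → ZMod (p^e)}
    (hu : Primitive u) (hv : Primitive v) (hw : Primitive w)
    (hd : ∀ j, v j = u j + (p:ZMod (p^e))^(e-1) * d j)
    (hWU : ¬ assoc u w) (hWV : ¬ assoc v w) :
    Fcount w u = Fcount w v := by
  have he' : e ≠ 0 := by omega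
  by_cases hind : Indep2 w u
  · have hindv : Indep2 w v :=
      indep2_congr_mod_p he' (fun j => rfl) (pr1_eq_of_top he hd) hind
    rw [Fcount_eq_formula he hn w u w u 0 hind
        (fun x => by rw [pow_zero, one_mul]),
      Fcount_eq_formula he hn w v w v 0 hindv
        (fun x => by rw [pow_zero, one_mul])]
  · have hniuw : ¬ Indep2 u w := indep2_neg_symm hind
    obtain ⟨t, m, hm⟩ := not_indep2_decomp he' hu hniuw
    have ht : IsUnit t := by
      by_contra hnt
      rw [isUnit_iff_pr1 he', not_not] at hnt
      have hbad : ∀ j, ¬ IsUnit (w j) := by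
        intro j
        rw [isUnit_iff_pr1 he', not_not, hm j, map_add, map_mul, hnt, zero_mul, zero_add]
        have h1 := pr1_pow_mul (p := p) he' (le_refl 1) (m j)
        rwa [pow_one] at h1
      obtain ⟨i, hi⟩ := (primitive_iff he' w).1 hw
      exact hbad i hi
    exact Fcount_step he hn hu hv hw hd hWU hWV (e-1) 1 (by omega) le_rfl t ht m
      (fun i => by rw [hm i, pow_one])

lemma Fcount_diag (he : 2 ≤ e) (hn : 2 ≤ n) {u v d : Fin n → ZMod (p^e)}
    (hu : Primitive u) (hv : Primitive v)
    (hd : ∀ j, v j = u j + (p:ZMod (p^e))^(e-1) * d j)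
    (hUV : ¬ assoc u v) :
    Fcount u u = Fcount u v + (p^e).totient * p^(e*(n-2)) := by
  have he' : e ≠ 0 := by omega
  have hpe : (p : ZMod (p^e))^e = 0 := by
    have : ((p^e : ℕ) : ZMod (p^e)) = 0 := ZMod.natCast_self _
    rw [← this]; push_cast; ring
  obtain ⟨i0, hi0⟩ := (primitive_iff he' u).1 hu
  have hcard : 1 < Fintype.card (Fin n) := by simp; omega
  obtain ⟨j0, hj0⟩ := Fintype.exists_ne_of_one_lt_card hcard i0
  have hub0 : Indep2 u (Pi.single j0 (1 : ZMod (p^e))) := by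
    refine ⟨i0, j0, ?_⟩
    rw [Pi.single_eq_same, Pi.single_eq_of_ne (Ne.symm hj0)]
    simpa using hi0
  have h1 : Fcount u u
      = p^(e*(n-2)) * p^(min e e) - p^((e-1)*(n-2)) * p^(min e (e-1)) := by
    refine Fcount_eq_formula he hn u u u (Pi.single j0 (1 : ZMod (p^e))) e hub0 (fun x => ?_)
    rw [hpe, zero_mul]
    constructor
    · rintro ⟨h1, -⟩; exact ⟨h1, rfl⟩
    · rintro ⟨h1, -⟩; exact ⟨h1, h1⟩
  have hud : Indep2 u d := by
    by_contra hni
    exact hUV (assoc_of_top he hu isUnit_one (fun j => by rw [hd j, one_mul]) hni)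
  have h2 : Fcount u v
      = p^(e*(n-2)) * p^(min (e-1) e) - p^((e-1)*(n-2)) * p^(min (e-1) (e-1)) := by
    refine Fcount_eq_formula he hn u v u d (e-1) hud (fun x => ?_)
    have hdv : dotv v x = dotv u x + (p:ZMod (p^e))^(e-1) * dotv d x := by
      rw [show v = fun i => 1 * u i + (p:ZMod (p^e))^(e-1) * d i
        from funext fun i => by rw [hd i]; ring, dotv_comb, one_mul]
    constructor
    · rintro ⟨ha, hb⟩
      refine ⟨ha, ?_⟩
      rw [ha, zero_add] at hdv
      rw [← hdv, hb]
    · rintro ⟨ha, hb⟩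
      refine ⟨ha, ?_⟩
      rw [hdv, ha, zero_add, hb]
  rw [h1, h2]
  simp only [min_self]
  rw [min_eq_right (show e-1 ≤ e by omega), min_eq_left (show e-1 ≤ e by omega)]
  have htot : (p^e).totient = p^(e-1) * (p-1) := Nat.totient_prime_pow hp.out (by omega)
  rw [htot]
  set A := p^(e*(n-2)) with hA
  set B := p^((e-1)*(n-2)) with hB
  have hBA : B ≤ A := Nat.pow_le_pow_right hp.out.pos (by
    exact Nat.mul_le_mul_right _ (by omega))
  have hle1 : B * p^(e-1) ≤ A * p^(e-1) := Nat.mul_le_mul_right _ hBA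
  have hle2 : B * p^(e-1) ≤ A * p^e :=
    le_trans hle1 (Nat.mul_le_mul_left _ (Nat.pow_le_pow_right hp.out.pos (by omega)))
  have hsp : (p:ℤ)^e = (p:ℤ)^(e-1) * p := by
    rw [← pow_succ]; congr 1; omega
  zify [hle1, hle2, hp.out.one_le]
  linear_combination (A:ℤ) * hsp
end I

/-! ### Section J: the reduction map on projective points, and entry identities -/

section J
variable {p : ℕ} [hp : Fact p.Prime] {e n : ℕ}

lemma red_eq_qmap (x : Fin n → ZMod (p^e)) : red p e x = fun i => qmap p e (x i) := rfl

lemma primitive_red (he : 2 ≤ e) {x : Fin n → ZMod (p^e)} (hx : Primitive x) :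
    Primitive (red p e x) := by
  rw [primitive_iff (show e - 1 ≠ 0 by omega)]
  obtain ⟨i, hi⟩ := (primitive_iff (show e ≠ 0 by omega) x).1 hx
  exact ⟨i, hi.map (qmap p e)⟩

noncomputable def RedP (he : 2 ≤ e) : ProjPt (p^e) n → ProjPt (p^(e-1)) n :=
  Quotient.map (fun u => ⟨red p e u.1, primitive_red he u.2⟩)
    (by
      rintro a b ⟨lam, hl⟩
      refine ⟨Units.map (qmap p e).toMonoidHom lam, funext fun i => ?_⟩
      show qmap p e (b.1 i) = (qmap p e lam) * qmap p e (a.1 i)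
      rw [hl]
      exact map_mul _ _ _)

lemma RedP_mk (he : 2 ≤ e) (u : {x : Fin n → ZMod (p^e) // Primitive x}) :
    RedP he (Quotient.mk (projSetoid (p^e) n) u)
      = Quotient.mk (projSetoid (p^(e-1)) n) ⟨red p e u.1, primitive_red he u.2⟩ := rfl

lemma qmap_zero_iff (z : ZMod (p^e)) : qmap p e z = 0 ↔ p^(e-1) ∣ z.val := by
  haveI : NeZero (p^(e-1)) := ⟨pow_ne_zero _ hp.out.pos.ne'⟩
  rw [qmap_apply, ZMod.natCast_eq_zero_iff]

lemma exists_good_reps (he : 2 ≤ e) {U V : ProjPt (p^e) n} (hred : RedP he U = RedP he V) :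
    ∃ (u v : {x : Fin n → ZMod (p^e) // Primitive x}) (d : Fin n → ZMod (p^e)),
      Quotient.mk (projSetoid (p^e) n) u = U ∧ Quotient.mk (projSetoid (p^e) n) v = V
        ∧ ∀ j, v.1 j = u.1 j + (p:ZMod (p^e))^(e-1) * d j := by
  have he' : e ≠ 0 := by omega
  have he1 : e - 1 ≠ 0 := by omega
  haveI : NeZero (p^(e-1)) := ⟨pow_ne_zero _ hp.out.pos.ne'⟩
  set u0 := U.out with hu0
  set v0 := V.out with hv0
  have hredm : RedP he (Quotient.mk (projSetoid (p^e) n) u0)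
      = RedP he (Quotient.mk (projSetoid (p^e) n) v0) := by
    rw [Quotient.out_eq, Quotient.out_eq]
    exact hred
  rw [RedP_mk he, RedP_mk he] at hredm
  obtain ⟨lam, hlam⟩ : assoc (red p e u0.1) (red p e v0.1) := Quotient.exact hredm
  set c : ZMod (p^e) := (((lam : ZMod (p^(e-1))).val : ℕ) : ZMod (p^e)) with hc
  have hqc : qmap p e c = (lam : ZMod (p^(e-1))) := by
    rw [hc, map_natCast]
    exact ZMod.natCast_rightInverse _
  have hcu : IsUnit c := by
    rw [isUnit_zmod_pow_iff he']
    have hvlt : (lam : ZMod (p^(e-1))).val < p^e :=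
      lt_of_lt_of_le (ZMod.val_lt _) (Nat.pow_le_pow_right hp.out.pos (by omega))
    rw [hc, ZMod.val_natCast, Nat.mod_eq_of_lt hvlt]
    exact (isUnit_zmod_pow_iff he1 _).1 (Units.isUnit lam)
  set u : Fin n → ZMod (p^e) := fun i => c * u0.1 i with hu
  have huprim : Primitive u := primitive_smul he' hcu.unit (by
    simpa [IsUnit.unit_spec] using u0.2)
  have hmku : Quotient.mk (projSetoid (p^e) n) ⟨u, huprim⟩ = U := by
    rw [← Quotient.out_eq U]
    refine (Quotient.sound ?_).symm
    show assoc u0.1 u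
    exact ⟨hcu.unit, funext fun i => by rw [hu]; simp [IsUnit.unit_spec]⟩
  have hkey : ∀ j, ∃ dj, v0.1 j - u j = (p:ZMod (p^e))^(e-1) * dj := by
    intro j
    apply exists_pow_mul_of_dvd_val
    rw [← qmap_zero_iff (v0.1 j - u j)]
    have hred0 : red p e v0.1 j = (lam : ZMod (p^(e-1))) * red p e u0.1 j := by
      rw [hlam]
    rw [map_sub]
    rw [show qmap p e (v0.1 j) = red p e v0.1 j from rfl]
    rw [hred0, hu]
    simp only
    rw [map_mul, hqc]
    rw [show qmap p e (u0.1 j) = red p e u0.1 j from rfl, sub_self]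
  choose d hd using hkey
  refine ⟨⟨u, huprim⟩, v0, d, hmku, Quotient.out_eq V, fun j => ?_⟩
  have := hd j
  show v0.1 j = u j + (p:ZMod (p^e))^(e-1) * d j
  linear_combination this
end J

/-! ### Section K: entry identities for Bmat counts -/

noncomputable def cardB (m n : ℕ) (U V : ProjPt m n) : ℕ :=
  Nat.card {W : ProjPt m n // orthoPt m n U W ∧ orthoPt m n V W}

lemma Bmat_eq_cardB (m n : ℕ) (U V : ProjPt m n) : Bmat m n U V = (cardB m n U V : ℚ) := rfl

section K
variable {p : ℕ} [hp : Fact p.Prime] {e n : ℕ}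

lemma not_assoc_of_ne {m : ℕ} (a b : {x : Fin n → ZMod m // Primitive x})
    (h : Quotient.mk (projSetoid m n) a ≠ Quotient.mk (projSetoid m n) b) : ¬ assoc a.1 b.1 :=
  fun hassoc => h (Quotient.sound hassoc)

lemma totient_pos' : 0 < (p^e).totient :=
  Nat.totient_pos.2 (pow_pos hp.out.pos e)

lemma cardB_offdiag (he : 2 ≤ e) (hn : 2 ≤ n) {U V W : ProjPt (p^e) n}
    (hred : RedP he U = RedP he V) (hWU : W ≠ U) (hWV : W ≠ V) :
    cardB (p^e) n W U = cardB (p^e) n W V := by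
  have he' : e ≠ 0 := by omega
  obtain ⟨u, v, d, hu, hv, hd⟩ := exists_good_reps he hred
  set w0 := W.out with hw0
  have h1 := B_entry_count he' W U w0 u (Quotient.out_eq W) hu
  have h2 := B_entry_count he' W V w0 v (Quotient.out_eq W) hv
  have hWU' : ¬ assoc u.1 w0.1 := not_assoc_of_ne u w0 (by
    rw [hu, Quotient.out_eq]; exact fun h => hWU h.symm)
  have hWV' : ¬ assoc v.1 w0.1 := not_assoc_of_ne v w0 (by
    rw [hv, Quotient.out_eq]; exact fun h => hWV h.symm)
  have hF : Fcount w0.1 u.1 = Fcount w0.1 v.1 :=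
    Fcount_offdiag he hn u.2 v.2 w0.2 hd hWU' hWV'
  apply Nat.eq_of_mul_eq_mul_left (totient_pos' (p := p) (e := e))
  calc (p^e).totient * cardB (p^e) n W U = Fcount w0.1 u.1 := h1
  _ = Fcount w0.1 v.1 := hF
  _ = (p^e).totient * cardB (p^e) n W V := h2.symm

lemma cardB_diag (he : 2 ≤ e) (hn : 2 ≤ n) {U V : ProjPt (p^e) n}
    (hUV : U ≠ V) (hred : RedP he U = RedP he V) :
    cardB (p^e) n U U = cardB (p^e) n U V + p^(e*(n-2)) := by
  have he' : e ≠ 0 := by omega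
  obtain ⟨u, v, d, hu, hv, hd⟩ := exists_good_reps he hred
  have h1 := B_entry_count he' U U u u hu hu
  have h2 := B_entry_count he' U V u v hu hv
  have hUV' : ¬ assoc u.1 v.1 := not_assoc_of_ne u v (by rw [hu, hv]; exact hUV)
  have hF : Fcount u.1 u.1 = Fcount u.1 v.1 + (p^e).totient * p^(e*(n-2)) :=
    Fcount_diag he hn u.2 v.2 hd hUV'
  apply Nat.eq_of_mul_eq_mul_left (totient_pos' (p := p) (e := e))
  calc (p^e).totient * cardB (p^e) n U U = Fcount u.1 u.1 := h1
  _ = Fcount u.1 v.1 + (p^e).totient * p^(e*(n-2)) := hF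
  _ = (p^e).totient * (cardB (p^e) n U V + p^(e*(n-2))) := by
      have h2' : (p^e).totient * cardB (p^e) n U V = Fcount u.1 v.1 := h2
      rw [← h2']; ring

end K

/-! ### Section L: eigenvectors -/

noncomputable def evec {ι : Type*} (U V : ι) : ι → ℚ :=
  fun X => (if X = U then 1 else 0) - (if X = V then 1 else 0)

section L
variable {p : ℕ} [hp : Fact p.Prime] {e n : ℕ}

lemma sum_mul_ite {ι : Type*} [Fintype ι] (f : ι → ℚ) (U : ι) :
    ∑ X, f X * (if X = U then (1:ℚ) else 0) = f U := by
  simp only [mul_ite, mul_one, mul_zero]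
  rw [Finset.sum_ite_eq' Finset.univ U f]
  simp

lemma eigvec (he : 2 ≤ e) (hn : 2 ≤ n) {U V : ProjPt (p^e) n} (hUV : U ≠ V)
    (hred : RedP he U = RedP he V) :
    (Bmat (p^e) n).mulVecLin (evec U V) = ((p:ℚ)^(e*(n-2))) • (evec U V) := by
  funext W
  rw [Matrix.mulVecLin_apply]
  have hLHS : (Bmat (p^e) n).mulVec (evec U V) W
      = Bmat (p^e) n W U - Bmat (p^e) n W V := by
    show ∑ X, Bmat (p^e) n W X * (evec U V) X = _
    unfold evec
    simp only [mul_sub]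
    rw [Finset.sum_sub_distrib, sum_mul_ite, sum_mul_ite]
  rw [hLHS]
  rw [Pi.smul_apply]
  unfold evec
  by_cases hWU : W = U
  · subst hWU
    have hdiag := cardB_diag he hn hUV hred
    rw [Bmat_eq_cardB, Bmat_eq_cardB, hdiag, if_pos rfl, if_neg hUV, smul_eq_mul]
    push_cast
    ring
  · by_cases hWV : W = V
    · subst hWV
      have hdiag := cardB_diag he hn (Ne.symm hUV) hred.symm
      rw [Bmat_eq_cardB, Bmat_eq_cardB, hdiag, if_neg hWU, if_pos rfl, smul_eq_mul]
      push_cast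
      ring
    · have hoff := cardB_offdiag he hn hred hWU hWV
      rw [Bmat_eq_cardB, Bmat_eq_cardB, hoff, if_neg hWU, if_neg hWV, smul_eq_mul]
      ring

lemma mem_eig_ker (he : 2 ≤ e) (hn : 2 ≤ n) {U V : ProjPt (p^e) n} (hUV : U ≠ V)
    (hred : RedP he U = RedP he V) :
    evec U V ∈ LinearMap.ker ((Bmat (p^e) n).mulVecLin
      - ((p:ℚ)^(e*(n-2))) • (LinearMap.id : (ProjPt (p^e) n → ℚ) →ₗ[ℚ] (ProjPt (p^e) n → ℚ))) := by
  rw [LinearMap.mem_ker, LinearMap.sub_apply, LinearMap.smul_apply, LinearMap.id_apply,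
    eigvec he hn hUV hred, sub_self]

end L

/-! ### Section M: fibers of the reduction map are large -/

section M
variable {p : ℕ} [hp : Fact p.Prime] {e n : ℕ}

lemma p_dvd_of_pow_mul_eq_zero (he : 2 ≤ e) (x : ZMod (p^e))
    (h : (p:ZMod (p^e))^(e-1) * x = 0) : p ∣ x.val := by
  haveI : NeZero (p^e) := ⟨pow_ne_zero _ hp.out.pos.ne'⟩
  have hcast : ((p^(e-1) * x.val : ℕ) : ZMod (p^e)) = 0 := by
    push_cast
    rw [ZMod.natCast_rightInverse x]
    exact h
  rw [ZMod.natCast_eq_zero_iff] at hcast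
  have hfac : p^e = p^(e-1) * p := by rw [← pow_succ]; congr 1; omega
  have h2 : p^(e-1) * p ∣ p^(e-1) * x.val := by rw [← hfac]; exact hcast
  exact (mul_dvd_mul_iff_left (pow_ne_zero _ hp.out.pos.ne')).1 h2

lemma fiber_card_s17 (he : 2 ≤ e) (hn : 2 ≤ n) (P : ProjPt (p^(e-1)) n) :
    p^(n-1) ≤ Nat.card {Q : ProjPt (p^e) n // RedP he Q = P} := by
  have he' : e ≠ 0 := by omega
  have he1 : e - 1 ≠ 0 := by omega
  haveI : NeZero (p^e) := ⟨pow_ne_zero _ hp.out.pos.ne'⟩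
  haveI : NeZero (p^(e-1)) := ⟨pow_ne_zero _ hp.out.pos.ne'⟩
  haveI : NeZero p := ⟨hp.out.pos.ne'⟩
  set ubar := P.out with hubar
  set u0 : Fin n → ZMod (p^e) := fun i => (((ubar.1 i).val : ℕ) : ZMod (p^e)) with hu0
  have hq0 : ∀ i, qmap p e (u0 i) = ubar.1 i := by
    intro i
    rw [hu0]
    simp only
    rw [map_natCast]
    exact ZMod.natCast_rightInverse _
  have hval0 : ∀ i, (u0 i).val = (ubar.1 i).val := by
    intro i
    rw [hu0]
    simp only
    rw [ZMod.val_natCast, Nat.mod_eq_of_lt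
      (lt_of_lt_of_le (ZMod.val_lt _) (Nat.pow_le_pow_right hp.out.pos (by omega)))]
  obtain ⟨i0, hi0⟩ := (primitive_iff he1 _).1 ubar.2
  have hu0i0 : IsUnit (u0 i0) := by
    rw [isUnit_zmod_pow_iff he', hval0]
    exact (isUnit_zmod_pow_iff he1 _).1 hi0
  set Lv : (Fin n → ZMod p) → (Fin n → ZMod (p^e)) :=
    fun w i => u0 i + (p:ZMod (p^e))^(e-1) * (((w i).val : ℕ) : ZMod (p^e)) with hLv
  have hLprim : ∀ w, Primitive (Lv w) := by
    intro w
    rw [primitive_iff he']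
    exact ⟨i0, isUnit_add_pow he' (by omega) hu0i0 _⟩
  have hppow : ((p:ZMod (p^(e-1))))^(e-1) = 0 := by
    have : ((p^(e-1) : ℕ) : ZMod (p^(e-1))) = 0 := ZMod.natCast_self _
    rw [← this]; push_cast; ring
  have hqL : ∀ w i, qmap p e (Lv w i) = ubar.1 i := by
    intro w i
    rw [hLv]
    simp only
    rw [map_add, map_mul, map_pow, hq0 i]
    simp only [map_natCast]
    rw [hppow, zero_mul, add_zero]
  set Qf : (Fin n → ZMod p) → ProjPt (p^e) n :=
    fun w => Quotient.mk (projSetoid (p^e) n) ⟨Lv w, hLprim w⟩ with hQf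
  have hQfP : ∀ w, RedP he (Qf w) = P := by
    intro w
    rw [hQf]
    simp only
    rw [RedP_mk he]
    have hsub : (⟨red p e (Lv w), primitive_red he (hLprim w)⟩ :
        {x : Fin n → ZMod (p^(e-1)) // Primitive x}) = ubar :=
      Subtype.ext (funext (hqL w))
    rw [hsub, hubar, Quotient.out_eq]
  -- fibers of Qf are contained in lines
  have hfib : ∀ w w', Qf w = Qf w' →
      ∃ t : ZMod p, ∀ i, w' i = w i + t * pr1 p he' (u0 i) := by
    intro w w' h
    obtain ⟨lam, hlam⟩ : assoc (Lv w) (Lv w') := Quotient.exact h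
    have h1 : ∀ i, ubar.1 i = qmap p e lam * ubar.1 i := by
      intro i
      have hc := congrFun hlam i
      have := congrArg (qmap p e) hc
      rw [map_mul, hqL, hqL] at this
      exact this
    have hq1 : qmap p e (lam : ZMod (p^e)) = 1 := by
      refine unit_cancel_s17 hi0 ?_
      rw [one_mul]
      exact (h1 i0).symm
    obtain ⟨s, hs⟩ : ∃ s, (lam : ZMod (p^e)) - 1 = (p:ZMod (p^e))^(e-1) * s := by
      apply exists_pow_mul_of_dvd_val
      rw [← qmap_zero_iff]
      rw [map_sub, hq1, map_one, sub_self]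
    refine ⟨pr1 p he' s, fun i => ?_⟩
    have hLi := congrFun hlam i
    have hL : Lv w i = u0 i + (p:ZMod (p^e))^(e-1) * (((w i).val : ℕ) : ZMod (p^e)) := rfl
    have hLi' : Lv w' i = u0 i + (p:ZMod (p^e))^(e-1) * (((w' i).val : ℕ) : ZMod (p^e)) := rfl
    have hzero : (p:ZMod (p^e))^(e-1) * ((((w' i).val : ℕ):ZMod (p^e))
        - (((w i).val : ℕ):ZMod (p^e)) - s * Lv w i) = 0 := by
      rw [hLi'] at hLi
      linear_combination hLi + hL + (Lv w i) * hs
    have hdvd := p_dvd_of_pow_mul_eq_zero he _ hzero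
    have hpr := (pr1_eq_zero_iff he' _).2 hdvd
    rw [map_sub, map_sub, map_mul] at hpr
    have hprW : ∀ v : ZMod p, pr1 p he' (((v.val : ℕ) : ZMod (p^e))) = v := by
      intro v
      rw [map_natCast]
      exact ZMod.natCast_rightInverse _
    have hprL : pr1 p he' (Lv w i) = pr1 p he' (u0 i) := by
      rw [hL, map_add, pr1_pow_mul he' (by omega), add_zero]
    rw [hprW, hprW, hprL] at hpr
    linear_combination hpr
  -- counting
  classical
  have hcardfun : Fintype.card (Fin n → ZMod p) = p^n := by
    rw [Fintype.card_fun]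
    simp [ZMod.card]
  have hbound : ∀ b ∈ Finset.univ.image Qf,
      (Finset.univ.filter (fun w => Qf w = b)).card ≤ p := by
    intro b hb
    obtain ⟨w0, -, hw0⟩ := Finset.mem_image.1 hb
    have hsub : Finset.univ.filter (fun w => Qf w = b)
        ⊆ Finset.univ.image (fun t : ZMod p => (fun i => w0 i + t * pr1 p he' (u0 i))) := by
      intro w' hw'
      rw [Finset.mem_filter] at hw'
      obtain ⟨t, ht⟩ := hfib w0 w' (by rw [hw0, hw'.2])
      exact Finset.mem_image.2 ⟨t, Finset.mem_univ t, (funext fun i => (ht i).symm)⟩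
    calc (Finset.univ.filter (fun w => Qf w = b)).card
        ≤ (Finset.univ.image (fun t : ZMod p => (fun i => w0 i + t * pr1 p he' (u0 i)))).card :=
          Finset.card_le_card hsub
    _ ≤ (Finset.univ : Finset (ZMod p)).card := Finset.card_image_le
    _ = p := by rw [Finset.card_univ, ZMod.card]
  have himg : p^n ≤ p * (Finset.univ.image Qf).card := by
    have := Finset.card_le_mul_card_image (f := Qf) Finset.univ p hbound
    rwa [Finset.card_univ, hcardfun] at this
  have himg2 : p^(n-1) ≤ (Finset.univ.image Qf).card := by
    refine Nat.le_of_mul_le_mul_left ?_ hp.out.pos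
    calc p * p^(n-1) = p^n := by rw [← pow_succ']; congr 1; omega
    _ ≤ p * (Finset.univ.image Qf).card := himg
  have hsub2 : Finset.univ.image Qf ⊆ Finset.univ.filter (fun Q => RedP he Q = P) := by
    intro Q hQ
    obtain ⟨w, -, hw⟩ := Finset.mem_image.1 hQ
    exact Finset.mem_filter.2 ⟨Finset.mem_univ _, by rw [← hw]; exact hQfP w⟩
  calc p^(n-1) ≤ (Finset.univ.image Qf).card := himg2
  _ ≤ (Finset.univ.filter (fun Q => RedP he Q = P)).card := Finset.card_le_card hsub2
  _ = Nat.card {Q : ProjPt (p^e) n // RedP he Q = P} := by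
      rw [Nat.card_eq_fintype_card, Fintype.card_subtype]

end M

/-! ### Final assembly -/

theorem stmt17' (p e n : ℕ) [hp : Fact p.Prime] (he : 2 ≤ e) (hn : 2 ≤ n) :
    (p^(n-1) - 1) * theta n (p^(e-1)) ≤ eigMult (Bmat (p^e) n) ((p : ℚ)^(e*(n-2))) := by
  classical
  have he' : e ≠ 0 := by omega
  -- surjectivity of the reduction
  have hsurj : Function.Surjective (RedP (p := p) (n := n) he) := by
    intro P
    have h := fiber_card_s17 he hn P
    have hpos : 0 < Nat.card {Q : ProjPt (p^e) n // RedP he Q = P} :=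
      lt_of_lt_of_le (pow_pos hp.out.pos _) h
    obtain ⟨⟨Q, hQ⟩⟩ := (Nat.card_pos_iff.1 hpos).1
    exact ⟨Q, hQ⟩
  set sec := Function.surjInv hsurj with hsecdef
  have hsecP : ∀ P, RedP he (sec P) = P := fun P => Function.surjInv_eq hsurj P
  set S := Finset.univ.filter (fun Q : ProjPt (p^e) n => Q ≠ sec (RedP he Q)) with hS
  -- lower bound on the size of S
  have hScard : (p^(n-1) - 1) * theta n (p^(e-1)) ≤ S.card := by
    have hfibsum := Finset.card_eq_sum_card_fiberwise
      (s := S) (t := Finset.univ) (f := RedP he) (fun x _ => Finset.mem_univ _)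
    rw [hfibsum]
    have heach : ∀ P : ProjPt (p^(e-1)) n,
        p^(n-1) - 1 ≤ (S.filter (fun Q => RedP he Q = P)).card := by
      intro P
      have hset : S.filter (fun Q => RedP he Q = P)
          = (Finset.univ.filter (fun Q => RedP he Q = P)).erase (sec P) := by
        ext Q
        rw [hS]
        simp only [Finset.mem_filter, Finset.mem_erase, Finset.filter_filter, Finset.mem_univ,
          true_and]
        constructor
        · rintro ⟨hne, hQP⟩
          exact ⟨by rw [← hQP]; exact hne, hQP⟩
        · rintro ⟨hne, hQP⟩
          exact ⟨by rw [hQP]; exact hne, hQP⟩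
      rw [hset, Finset.card_erase_of_mem (by
        simp only [Finset.mem_filter, Finset.mem_univ, true_and]
        exact hsecP P)]
      have hge : p^(n-1) ≤ (Finset.univ.filter (fun Q => RedP he Q = P)).card := by
        rw [← Fintype.card_subtype, ← Nat.card_eq_fintype_card]
        exact fiber_card_s17 he hn P
      omega
    calc (p^(n-1) - 1) * theta n (p^(e-1))
        = ∑ _P : ProjPt (p^(e-1)) n, (p^(n-1) - 1) := by
          rw [Finset.sum_const, Finset.card_univ, theta, Nat.card_eq_fintype_card]
          ring
    _ ≤ ∑ P : ProjPt (p^(e-1)) n, (S.filter (fun Q => RedP he Q = P)).card :=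
          Finset.sum_le_sum (fun P _ => heach P)
  -- the eigenspace
  set lam : ℚ := (p:ℚ)^(e*(n-2)) with hlam
  set K := LinearMap.ker ((Bmat (p^e) n).mulVecLin
    - lam • (LinearMap.id : (ProjPt (p^e) n → ℚ) →ₗ[ℚ] (ProjPt (p^e) n → ℚ))) with hK
  have hmem : ∀ Q : ProjPt (p^e) n, Q ∈ S → evec Q (sec (RedP he Q)) ∈ K := by
    intro Q hQ
    exact mem_eig_ker he hn (Finset.mem_filter.1 hQ).2 (hsecP (RedP he Q)).symm
  set vfun : {Q : ProjPt (p^e) n // Q ∈ S} → (ProjPt (p^e) n → ℚ) :=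
    fun Q => evec Q.1 (sec (RedP he Q.1)) with hvfun
  have hind : LinearIndependent ℚ vfun := by
    rw [linearIndependent_iff']
    intro s g hsum Q hQs
    have happ := congrFun hsum Q.1
    simp only [Finset.sum_apply, Pi.smul_apply, smul_eq_mul, Pi.zero_apply] at happ
    have hterm : ∀ j ∈ s, g j * vfun j Q.1 = if j = Q then g j else 0 := by
      intro j hjs
      rw [hvfun]
      simp only
      unfold evec
      by_cases hjQ : j = Q
      · subst hjQ
        rw [if_pos rfl, if_pos rfl, if_neg ?hne]
        · ring
        case hne =>
          exact (Finset.mem_filter.1 j.2).2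
      · rw [if_neg hjQ, if_neg ?h1, if_neg ?h2]
        · ring
        case h1 =>
          intro hQj
          exact hjQ (Subtype.ext hQj.symm)
        case h2 =>
          intro hQsec
          have h1 : RedP he Q.1 = RedP he j.1 := by rw [hQsec, hsecP]
          have h2 : Q.1 = sec (RedP he Q.1) := by rw [h1, ← hQsec]
          exact (Finset.mem_filter.1 Q.2).2 h2
    rw [Finset.sum_congr rfl hterm, Finset.sum_ite_eq' s Q g, if_pos hQs] at happ
    exact happ
  set vK : {Q : ProjPt (p^e) n // Q ∈ S} → K := fun Q => ⟨vfun Q, hmem Q.1 Q.2⟩ with hvK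
  have hindK : LinearIndependent ℚ vK := by
    apply LinearIndependent.of_comp K.subtype
    exact hind
  have hcard := hindK.fintype_card_le_finrank
  rw [Fintype.card_coe] at hcard
  calc (p^(n-1) - 1) * theta n (p^(e-1)) ≤ S.card := hScard
  _ ≤ Module.finrank ℚ K := hcard
  _ = eigMult (Bmat (p^e) n) lam := rfl

theorem stmt17 (p e n : ℕ) [Fact p.Prime] (he : 2 ≤ e) (hn : 2 ≤ n) :
    (p^(n-1) - 1) * theta n (p^(e-1)) ≤ eigMult (Bmat (p^e) n) ((p : ℚ)^(e*(n-2))) :=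
  stmt17' p e n he hn
end
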